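/- arXiv:2601.04161 — 3 statements merged into one kernel-verified Lean document; each statement's English description precedes it below -/
import Mathlib

section
/- Let ω be an elliptic environment and f : D_n → [0,∞) with f ≡ 0 on ∂D_n. Then there exists a unique function z ∈ 𝒜(ω,f) such that |Mz(x)|^{1/d} = f(x)/c(ω,x) for every x ∈ D_n°. -/
open MeasureTheory Filter Topology
open scoped ENNReal NNReal

noncomputable section

abbrev Zd (d : ℕ) := Fin d → ℤ

/-- The `i`-th standard unit vector of `ℤ^d`. -/
def eZ (d : ℕ) (i : Fin d) : Zd d := Pi.single i 1

/-- `V_d = {±e_1, …, ±e_d, 0}`. -/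
def Vfin (d : ℕ) : Finset (Zd d) :=
  ((Finset.univ.image fun i : Fin d => eZ d i) ∪
    (Finset.univ.image fun i : Fin d => -eZ d i)) ∪ {0}

/-- `S(d)`: probability vectors indexed by `V_d` (as functions on `ℤ^d` supported on `V_d`). -/
def Sd (d : ℕ) : Set (Zd d → ℝ) :=
  {p | (∀ v, 0 ≤ p v) ∧ (∀ v ∉ Vfin d, p v = 0) ∧ ∑ v ∈ Vfin d, p v = 1}

/-- `𝒮(d)`: environments, i.e. maps `ℤ^d → S(d)`, with the product σ-algebra. -/
abbrev Env (d : ℕ) := Zd d → Sd d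

/-- The shift `τ_x` on environments. -/
def shiftE {d : ℕ} (x : Zd d) (ω : Env d) : Env d := fun y => ω (x + y)

/-- `|x|₁ = Σ_i |x_i|`. -/
def normOne {d : ℕ} (x : Zd d) : ℤ := ∑ i, |x i|

/-- The second-order difference operator `Δ_i z(x) = z(x+e_i) + z(x−e_i) − 2 z(x)`. -/
def DC (d : ℕ) (z : Zd d → ℝ) (i : Fin d) (x : Zd d) : ℝ :=
  z (x + eZ d i) + z (x - eZ d i) - 2 * z x

/-- The discrete Monge–Ampère operator `Mz(x) = ∏_i Δ_i z(x)`. -/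
def MA (d : ℕ) (z : Zd d → ℝ) (x : Zd d) : ℝ := ∏ i : Fin d, DC d z i x

/-- `z` is concave on `D_n`: for every `x ∈ D_n°` and `v ∈ {±e_1,…,±e_d}`,
`z(x+v) + z(x−v) − 2z(x) ≤ 0`. -/
def IsConcaveD (d n : ℕ) (z : Zd d → ℝ) : Prop :=
  ∀ x : Zd d, normOne x < (n : ℤ) →
    ∀ v : Zd d, (∃ i : Fin d, v = eZ d i ∨ v = -eZ d i) →
      z (x + v) + z (x - v) - 2 * z x ≤ 0

/-- `c(ω,x) = (∏_{v ∈ V_d ∖ {0}} ω(x,v))^{1/(2d)}`. -/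
def cfun (d : ℕ) (ω : Env d) (x : Zd d) : ℝ :=
  (∏ v ∈ (Vfin d).erase 0, (ω x).1 v) ^ (2 * (d : ℝ))⁻¹

/-- `ω` is elliptic: `ω(x,v) > 0` for all `x` and all `v ∈ V_d ∖ {0}`. -/
def Elliptic (d : ℕ) (ω : Env d) : Prop :=
  ∀ x : Zd d, ∀ v ∈ Vfin d, v ≠ 0 → 0 < (ω x).1 v

/-- `ω` is balanced (env): `ω(x, e_i) = ω(x, −e_i)` for all `x` and `i`. -/
def BalancedEnv (d : ℕ) (ω : Env d) : Prop :=
  ∀ (x : Zd d) (i : Fin d), (ω x).1 (eZ d i) = (ω x).1 (-eZ d i)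

/-- The class `𝒜(ω,f)`: concave `u : D_n → [0,∞)` vanishing on `∂D_n` with
`|Mu(x)|^{1/d} ≥ f(x)/c(ω,x)` on `D_n°`. -/
def memA (d n : ℕ) (ω : Env d) (f : Zd d → ℝ) (u : Zd d → ℝ) : Prop :=
  IsConcaveD d n u ∧
  (∀ x : Zd d, normOne x ≤ (n : ℤ) → 0 ≤ u x) ∧
  (∀ x : Zd d, normOne x = (n : ℤ) → u x = 0) ∧
  ∀ x : Zd d, normOne x < (n : ℤ) → f x / cfun d ω x ≤ |MA d u x| ^ ((d : ℝ)⁻¹)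

lemma eZ_ne_zero (d : ℕ) (i : Fin d) : eZ d i ≠ 0 := by
  intro h
  have := congrFun h i
  simp [eZ, Pi.single_eq_same] at this

lemma normOne_nonneg {d : ℕ} (x : Zd d) : 0 ≤ normOne x :=
  Finset.sum_nonneg fun i _ => abs_nonneg _

lemma abs_le_normOne {d : ℕ} (x : Zd d) (i : Fin d) : |x i| ≤ normOne x :=
  Finset.single_le_sum (fun j _ => abs_nonneg (x j)) (Finset.mem_univ i)

lemma normOne_add_eZ {d : ℕ} (x : Zd d) (i : Fin d) :
    normOne (x + eZ d i) = normOne x - |x i| + |x i + 1| := by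
  have h : ∀ j, |(x + eZ d i) j| = |x j| + (if j = i then |x i + 1| - |x i| else 0) := by
    intro j
    by_cases hj : j = i
    · subst hj; simp [eZ, Pi.single_eq_same]
    · simp [eZ, Pi.single_eq_of_ne hj, hj]
  simp only [normOne, h, Finset.sum_add_distrib, Finset.sum_ite_eq' Finset.univ,
    Finset.mem_univ, if_true]
  ring

lemma normOne_sub_eZ {d : ℕ} (x : Zd d) (i : Fin d) :
    normOne (x - eZ d i) = normOne x - |x i| + |x i - 1| := by
  have h : ∀ j, |(x - eZ d i) j| = |x j| + (if j = i then |x i - 1| - |x i| else 0) := by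
    intro j
    by_cases hj : j = i
    · subst hj; simp [eZ, Pi.single_eq_same]
    · simp [eZ, Pi.single_eq_of_ne hj, hj]
  simp only [normOne, h, Finset.sum_add_distrib, Finset.sum_ite_eq' Finset.univ,
    Finset.mem_univ, if_true]
  ring

lemma normOne_add_eZ_le {d : ℕ} (x : Zd d) (i : Fin d) :
    normOne (x + eZ d i) ≤ normOne x + 1 := by
  rw [normOne_add_eZ]
  have := abs_add_le (x i) 1
  simp at this ⊢
  omega

lemma normOne_sub_eZ_le {d : ℕ} (x : Zd d) (i : Fin d) :
    normOne (x - eZ d i) ≤ normOne x + 1 := by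
  rw [normOne_sub_eZ]
  have := abs_sub (x i) 1
  have h1 : |x i - 1| ≤ |x i| + |(1:ℤ)| := abs_sub _ _
  simp at h1
  omega

/-- neighbors of interior points stay in the domain -/
lemma neighbor_mem {d n : ℕ} {x : Zd d} (hx : normOne x < (n:ℤ)) (i : Fin d) :
    normOne (x + eZ d i) ≤ (n:ℤ) ∧ normOne (x - eZ d i) ≤ (n:ℤ) :=
  ⟨le_trans (normOne_add_eZ_le x i) (by omega), le_trans (normOne_sub_eZ_le x i) (by omega)⟩

/-- the barrier function -/
def phiB (d n : ℕ) : Zd d → ℝ := fun x => (n:ℝ)^2 - ((normOne x : ℤ) : ℝ)^2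

lemma phiB_nonneg {d n : ℕ} (x : Zd d) (hx : normOne x ≤ (n:ℤ)) : 0 ≤ phiB d n x := by
  have h0 := normOne_nonneg x
  have : ((normOne x : ℤ):ℝ)^2 ≤ (n:ℝ)^2 := by
    have : ((normOne x : ℤ):ℝ) ≤ (n:ℝ) := by exact_mod_cast hx
    have h0' : (0:ℝ) ≤ ((normOne x : ℤ):ℝ) := by exact_mod_cast h0
    nlinarith
  simp [phiB]; linarith

lemma phiB_boundary {d n : ℕ} (x : Zd d) (hx : normOne x = (n:ℤ)) : phiB d n x = 0 := by
  simp [phiB, hx]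

lemma DC_phiB {d n : ℕ} (i : Fin d) (x : Zd d) : DC d (phiB d n) i x ≤ -2 := by
  have key : (normOne (x + eZ d i))^2 + (normOne (x - eZ d i))^2 - 2 * (normOne x)^2 ≥ 2 := by
    rw [normOne_add_eZ, normOne_sub_eZ]
    have hs := abs_le_normOne x i
    set a := x i with ha
    set s := normOne x with hs'
    rcases lt_trichotomy a 0 with h | h | h
    · have h1 : |a| = -a := abs_of_neg h
      have h2 : |a + 1| = -(a+1) ∨ |a+1| = a+1 := by
        rcases abs_choice (a+1) with h' | h'
        · right; exact h'
        · left; exact h'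
      have h3 : |a - 1| = -(a-1) := abs_of_neg (by omega)
      have h2' : |a + 1| = -a - 1 := by
        have : a + 1 ≤ 0 := by omega
        rw [abs_of_nonpos this]; ring
      rw [h1, h2', h3]
      nlinarith
    · rw [h]
      simp
      have h0 : (0:ℤ) ≤ s := hs' ▸ normOne_nonneg x
      nlinarith
    · have h1 : |a| = a := abs_of_pos h
      have h2 : |a + 1| = a + 1 := abs_of_pos (by omega)
      have h3 : |a - 1| = a - 1 := abs_of_nonneg (by omega)
      rw [h1, h2, h3]
      nlinarith
  have keyR : ((normOne (x + eZ d i) : ℤ):ℝ)^2 + ((normOne (x - eZ d i) : ℤ):ℝ)^2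
      - 2 * ((normOne x : ℤ):ℝ)^2 ≥ 2 := by exact_mod_cast key
  simp only [DC, phiB]
  linarith

lemma isConcaveD_iff_DC {d n : ℕ} (z : Zd d → ℝ) :
    IsConcaveD d n z ↔ ∀ x : Zd d, normOne x < (n:ℤ) → ∀ i : Fin d, DC d z i x ≤ 0 := by
  constructor
  · intro h x hx i
    exact h x hx (eZ d i) ⟨i, Or.inl rfl⟩
  · intro h x hx v hv
    obtain ⟨i, hv | hv⟩ := hv
    · subst hv; exact h x hx i
    · subst hv
      have := h x hx i
      have e1 : x + -eZ d i = x - eZ d i := by ring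
      have e2 : x - -eZ d i = x + eZ d i := by ring
      rw [e1, e2]
      simp only [DC] at this
      linarith

lemma abs_MA_of_concave {d : ℕ} {z : Zd d → ℝ} {x : Zd d}
    (hz : ∀ i : Fin d, DC d z i x ≤ 0) :
    |MA d z x| = ∏ i : Fin d, -(DC d z i x) := by
  rw [MA, Finset.abs_prod]
  exact Finset.prod_congr rfl fun i _ => abs_of_nonpos (hz i)

/-- D_n is finite -/
lemma finite_Dn (d : ℕ) (n : ℕ) : {x : Zd d | normOne x ≤ (n:ℤ)}.Finite := by
  apply Set.Finite.subset (Set.Finite.pi fun i : Fin d => Set.finite_Icc (-(n:ℤ)) n)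
  intro x hx
  simp only [Set.mem_pi, Set.mem_univ, Set.mem_Icc, forall_true_left]
  intro i
  have h1 := abs_le_normOne x i
  have h2 : |x i| ≤ (n:ℤ) := le_trans h1 hx
  exact abs_le.mp h2

lemma comparison {d n : ℕ} (hd : 1 ≤ d) (hn : 1 ≤ n) (u v : Zd d → ℝ)
    (hvC : IsConcaveD d n v)
    (hb : ∀ x : Zd d, normOne x = (n:ℤ) → u x ≤ v x)
    (hM : ∀ x : Zd d, normOne x < (n:ℤ) → |MA d u x| ≤ |MA d v x|) :
    ∀ x : Zd d, normOne x ≤ (n:ℤ) → u x ≤ v x := by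
  have hvDC := (isConcaveD_iff_DC (n := n) v).1 hvC
  have step1 : ∀ ε : ℝ, 0 < ε → ∀ y : Zd d, normOne y ≤ (n:ℤ) →
      u y - v y ≤ ε * phiB d n y := by
    intro ε hε
    set h : Zd d → ℝ := fun y => u y - v y - ε * phiB d n y with hh
    have hne : {x : Zd d | normOne x ≤ (n:ℤ)}.Nonempty := by
      refine ⟨0, ?_⟩
      simp [Set.mem_setOf_eq, normOne]
    obtain ⟨x₀, hx₀D, hmax0⟩ := Set.exists_max_image _ h (finite_Dn d n) hne
    simp only [Set.mem_setOf_eq] at hx₀D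
    have hmax : ∀ b : Zd d, normOne b ≤ (n:ℤ) →
        u b - v b - ε * phiB d n b ≤ u x₀ - v x₀ - ε * phiB d n x₀ :=
      fun b hb => hmax0 b hb
    rcases eq_or_lt_of_le hx₀D with hbd | hint
    · -- max on boundary
      intro y hy
      have h1 := hmax y hy
      have hub := hb x₀ hbd
      have hφ0 := phiB_boundary (n := n) x₀ hbd
      rw [hφ0] at h1
      linarith
    · -- interior max: contradiction
      exfalso
      have key : ∀ i : Fin d, -(DC d v i x₀) + 2*ε ≤ -(DC d u i x₀) := by
        intro i
        obtain ⟨hp, hm⟩ := neighbor_mem hint i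
        have h1 := hmax _ hp
        have h2 := hmax _ hm
        have h3 := DC_phiB (n := n) i x₀
        simp only [DC] at h3 ⊢
        have h4 : ε * (phiB d n (x₀ + eZ d i) + phiB d n (x₀ - eZ d i) - 2 * phiB d n x₀)
            ≤ ε * (-2) := mul_le_mul_of_nonneg_left h3 hε.le
        linarith
      have hc : ∀ i : Fin d, 0 ≤ -(DC d v i x₀) := fun i => neg_nonneg.2 (hvDC x₀ hint i)
      have ha : ∀ i : Fin d, 0 < -(DC d u i x₀) := fun i =>
        lt_of_lt_of_le (by linarith [hc i]) (key i)
      have hMA_u : |MA d u x₀| = ∏ i : Fin d, -(DC d u i x₀) :=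
        abs_MA_of_concave fun i => by linarith [ha i]
      have hMA_v : |MA d v x₀| = ∏ i : Fin d, -(DC d v i x₀) :=
        abs_MA_of_concave fun i => by linarith [hc i]
      have hlt : ∏ i : Fin d, -(DC d v i x₀) < ∏ i : Fin d, -(DC d u i x₀) := by
        rcases eq_or_lt_of_le (Finset.prod_nonneg fun i _ => hc i) with h0 | h0
        · rw [← h0]
          exact Finset.prod_pos fun i _ => ha i
        · have hcpos : ∀ i : Fin d, 0 < -(DC d v i x₀) := by
            intro i
            rcases eq_or_lt_of_le (hc i) with hz | hz
            · exfalso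
              have : ∏ i : Fin d, -(DC d v i x₀) = 0 :=
                Finset.prod_eq_zero (Finset.mem_univ i) hz.symm
              rw [this] at h0
              exact lt_irrefl 0 h0
            · exact hz
          have : Nonempty (Fin d) := ⟨⟨0, hd⟩⟩
          refine Finset.prod_lt_prod_of_nonempty (fun i _ => hcpos i)
            (fun i _ => lt_of_lt_of_le (by linarith [key i, hε]) (le_refl _)) ?_
          exact Finset.univ_nonempty
      have := hM x₀ hint
      rw [hMA_u, hMA_v] at this
      linarith
  intro x hx
  by_contra hcon
  push_neg at hcon
  have hφ : 0 ≤ phiB d n x := phiB_nonneg x hx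
  set ε := (u x - v x) / (2 * (phiB d n x + 1)) with hε
  have hεpos : 0 < ε := by
    apply div_pos (by linarith) (by linarith)
  have := step1 ε hεpos x hx
  rw [hε] at this
  have h2 : (u x - v x) / (2 * (phiB d n x + 1)) * phiB d n x
      ≤ (u x - v x) / 2 := by
    rw [div_mul_eq_mul_div]
    rw [div_le_div_iff₀ (by linarith) (by norm_num)]
    nlinarith
  linarith

lemma cfun_pos {d : ℕ} {ω : Env d} (hell : Elliptic d ω) (x : Zd d) : 0 < cfun d ω x := by
  apply Real.rpow_pos_of_pos
  apply Finset.prod_pos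
  intro v hv
  exact hell x v (Finset.mem_of_mem_erase hv) (Finset.ne_of_mem_erase hv)

lemma le_rpow_inv_iff_nat {d : ℕ} (hd : 1 ≤ d) {F P : ℝ} (hF : 0 ≤ F) (hP : 0 ≤ P) :
    F ≤ P ^ ((d:ℝ)⁻¹) ↔ F ^ d ≤ P := by
  have hd' : (0:ℝ) < (d:ℝ) := by exact_mod_cast Nat.lt_of_lt_of_le Nat.zero_lt_one hd
  rw [Real.le_rpow_inv_iff_of_pos hF hP hd', Real.rpow_natCast]

/-- barrier membership -/
lemma barrier_mem {d n : ℕ} (hd : 1 ≤ d) (ω : Env d) (f : Zd d → ℝ)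
    (K : ℝ) (hK1 : 1 ≤ K)
    (hF0 : ∀ x : Zd d, normOne x < (n:ℤ) → 0 ≤ f x / cfun d ω x)
    (hK : ∀ x : Zd d, normOne x < (n:ℤ) → f x / cfun d ω x ≤ 2 * K) :
    memA d n ω f (fun x => K * phiB d n x) := by
  have hKpos : (0:ℝ) < K := lt_of_lt_of_le zero_lt_one hK1
  have hDC : ∀ (i : Fin d) (x : Zd d), DC d (fun x => K * phiB d n x) i x ≤ -(2*K) := by
    intro i x
    have h1 : DC d (fun x => K * phiB d n x) i x = K * DC d (phiB d n) i x := by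
      simp only [DC]; ring
    rw [h1]
    have h2 := DC_phiB (n := n) i x
    nlinarith
  refine ⟨?_, ?_, ?_, ?_⟩
  · exact (isConcaveD_iff_DC _).2 fun x _ i => le_trans (hDC i x) (by linarith)
  · intro x hx
    exact mul_nonneg hKpos.le (phiB_nonneg x hx)
  · intro x hx
    show K * phiB d n x = 0
    rw [phiB_boundary x hx]; ring
  · intro x hx
    rw [le_rpow_inv_iff_nat hd (hF0 x hx) (abs_nonneg _)]
    have habs : |MA d (fun x => K * phiB d n x) x| = ∏ i : Fin d, -(DC d (fun x => K * phiB d n x) i x) :=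
      abs_MA_of_concave fun i => le_trans (hDC i x) (by linarith)
    rw [habs]
    calc (f x / cfun d ω x) ^ d ≤ (2*K) ^ d := by
          apply pow_le_pow_left₀ (hF0 x hx) (hK x hx)
      _ = ∏ _i : Fin d, (2*K) := by simp [Finset.prod_const, Finset.card_univ]
      _ ≤ ∏ i : Fin d, -(DC d (fun x => K * phiB d n x) i x) := by
          apply Finset.prod_le_prod (fun _ _ => by linarith) (fun i _ => by linarith [hDC i x])

def zInf (d n : ℕ) (ω : Env d) (f : Zd d → ℝ) : Zd d → ℝ :=
  fun x => sInf ((fun w => w x) '' {w | memA d n ω f w})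

section zInf
variable {d n : ℕ} {ω : Env d} {f : Zd d → ℝ}

lemma zInf_bddBelow {x : Zd d} (hx : normOne x ≤ (n:ℤ)) :
    BddBelow ((fun w => w x) '' {w | memA d n ω f w}) := by
  refine ⟨0, ?_⟩
  rintro y ⟨w, hw, rfl⟩
  exact hw.2.1 x hx

lemma zInf_le {w : Zd d → ℝ} (hw : memA d n ω f w) {x : Zd d} (hx : normOne x ≤ (n:ℤ)) :
    zInf d n ω f x ≤ w x :=
  csInf_le (zInf_bddBelow hx) ⟨w, hw, rfl⟩

lemma zInf_nonneg (hA : {w : Zd d → ℝ | memA d n ω f w}.Nonempty) {x : Zd d}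
    (hx : normOne x ≤ (n:ℤ)) : 0 ≤ zInf d n ω f x :=
  le_csInf (hA.image _) (by rintro y ⟨w, hw, rfl⟩; exact hw.2.1 x hx)

lemma zInf_approx (hA : {w : Zd d → ℝ | memA d n ω f w}.Nonempty) {x : Zd d}
    {ε : ℝ} (hε : 0 < ε) :
    ∃ w : Zd d → ℝ, memA d n ω f w ∧ w x < zInf d n ω f x + ε := by
  have h : sInf ((fun w => w x) '' {w | memA d n ω f w}) < zInf d n ω f x + ε :=
    lt_add_of_pos_right _ hε
  obtain ⟨y, ⟨w, hw, rfl⟩, hy⟩ := exists_lt_of_csInf_lt (hA.image _) h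
  exact ⟨w, hw, hy⟩

lemma zInf_boundary (hA : {w : Zd d → ℝ | memA d n ω f w}.Nonempty) {x : Zd d}
    (hx : normOne x = (n:ℤ)) : zInf d n ω f x = 0 := by
  obtain ⟨u₀, hu₀⟩ := hA
  have himg : (fun w => w x) '' {w | memA d n ω f w} = {0} := by
    apply Set.Subset.antisymm
    · rintro y ⟨w, hw, rfl⟩
      exact hw.2.2.1 x hx
    · rintro y hy
      rw [Set.mem_singleton_iff] at hy
      exact ⟨u₀, hu₀, by rw [hy]; exact hu₀.2.2.1 x hx⟩
  show sInf _ = 0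
  rw [himg, csInf_singleton]

lemma zInf_DC (hA : {w : Zd d → ℝ | memA d n ω f w}.Nonempty) {x : Zd d}
    (hx : normOne x < (n:ℤ)) (i : Fin d) : DC d (zInf d n ω f) i x ≤ 0 := by
  have := le_of_forall_pos_le_add (a := DC d (zInf d n ω f) i x) (b := 0) ?_
  · exact this
  intro ε hε
  obtain ⟨w, hw, hwx⟩ := zInf_approx (f := f) hA (x := x) (half_pos hε)
  obtain ⟨hp, hm⟩ := neighbor_mem hx i
  have h1 := zInf_le hw hp
  have h2 := zInf_le hw hm
  have h3 := ((isConcaveD_iff_DC w).1 hw.1) x hx i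
  simp only [DC] at h3 ⊢
  linarith

lemma zInf_concave (hA : {w : Zd d → ℝ | memA d n ω f w}.Nonempty) :
    IsConcaveD d n (zInf d n ω f) :=
  (isConcaveD_iff_DC _).2 fun _ hx i => zInf_DC hA hx i

lemma zInf_prod_ge (hd : 1 ≤ d) (hA : {w : Zd d → ℝ | memA d n ω f w}.Nonempty)
    (hF0 : ∀ x : Zd d, normOne x < (n:ℤ) → 0 ≤ f x / cfun d ω x)
    {x : Zd d} (hx : normOne x < (n:ℤ)) :
    (f x / cfun d ω x) ^ d ≤ ∏ i : Fin d, -(DC d (zInf d n ω f) i x) := by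
  have key : ∀ ε : ℝ, 0 < ε →
      (f x / cfun d ω x) ^ d ≤ ∏ i : Fin d, (-(DC d (zInf d n ω f) i x) + 2 * ε) := by
    intro ε hε
    obtain ⟨w, hw, hwx⟩ := zInf_approx (f := f) hA (x := x) hε
    have hwDC := (isConcaveD_iff_DC w).1 hw.1
    have hcomp : ∀ i : Fin d, -(DC d w i x) ≤ -(DC d (zInf d n ω f) i x) + 2 * ε := by
      intro i
      obtain ⟨hp, hm⟩ := neighbor_mem hx i
      have h1 := zInf_le hw hp
      have h2 := zInf_le hw hm
      simp only [DC]
      linarith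
    have h4 : (f x / cfun d ω x) ^ d ≤ |MA d w x| :=
      (le_rpow_inv_iff_nat hd (hF0 x hx) (abs_nonneg _)).1 (hw.2.2.2 x hx)
    have h5 : |MA d w x| = ∏ i : Fin d, -(DC d w i x) :=
      abs_MA_of_concave fun i => hwDC x hx i
    calc (f x / cfun d ω x) ^ d ≤ ∏ i : Fin d, -(DC d w i x) := h5 ▸ h4
      _ ≤ ∏ i : Fin d, (-(DC d (zInf d n ω f) i x) + 2 * ε) :=
          Finset.prod_le_prod (fun i _ => neg_nonneg.2 (hwDC x hx i)) (fun i _ => hcomp i)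
  have hcont : Continuous fun t : ℝ => ∏ i : Fin d, (-(DC d (zInf d n ω f) i x) + 2 * t) := by
    apply continuous_finset_prod
    intro i _
    continuity
  have htend : Filter.Tendsto (fun t : ℝ => ∏ i : Fin d, (-(DC d (zInf d n ω f) i x) + 2 * t))
      (nhdsWithin 0 (Set.Ioi 0)) (nhds (∏ i : Fin d, (-(DC d (zInf d n ω f) i x) + 2 * 0))) :=
    (hcont.tendsto 0).mono_left nhdsWithin_le_nhds
  have := ge_of_tendsto htend (Filter.eventually_of_mem self_mem_nhdsWithin
    fun t ht => key t ht)
  simpa using this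

lemma zInf_mem (hd : 1 ≤ d) (hA : {w : Zd d → ℝ | memA d n ω f w}.Nonempty)
    (hF0 : ∀ x : Zd d, normOne x < (n:ℤ) → 0 ≤ f x / cfun d ω x) :
    memA d n ω f (zInf d n ω f) := by
  refine ⟨zInf_concave hA, fun x hx => zInf_nonneg hA hx, fun x hx => zInf_boundary hA hx, ?_⟩
  intro x hx
  rw [le_rpow_inv_iff_nat hd (hF0 x hx) (abs_nonneg _),
    abs_MA_of_concave fun i => zInf_DC hA hx i]
  exact zInf_prod_ge hd hA hF0 hx

end zInf

lemma zInf_prod_le (hd : 1 ≤ d) {n : ℕ} {ω : Env d} {f : Zd d → ℝ}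
    (hA : {w : Zd d → ℝ | memA d n ω f w}.Nonempty)
    (hF0 : ∀ x : Zd d, normOne x < (n:ℤ) → 0 ≤ f x / cfun d ω x)
    {x : Zd d} (hx : normOne x < (n:ℤ)) :
    ∏ i : Fin d, -(DC d (zInf d n ω f) i x) ≤ (f x / cfun d ω x) ^ d := by
  by_contra hcon
  push_neg at hcon
  set z := zInf d n ω f with hz
  set g := (f x / cfun d ω x) ^ d with hg
  set P := ∏ i : Fin d, -(DC d z i x) with hP
  have hg0 : 0 ≤ g := pow_nonneg (hF0 x hx) d
  have hPpos : 0 < P := lt_of_le_of_lt hg0 hcon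
  have hbnn : ∀ i : Fin d, 0 ≤ -(DC d z i x) := fun i => neg_nonneg.2 (zInf_DC hA hx i)
  have hbpos : ∀ i : Fin d, 0 < -(DC d z i x) := by
    intro i
    rcases eq_or_lt_of_le (hbnn i) with h0 | h0
    · exfalso
      have : P = 0 := Finset.prod_eq_zero (Finset.mem_univ i) h0.symm
      rw [this] at hPpos; exact lt_irrefl 0 hPpos
    · exact h0
  have hNE : Nonempty (Fin d) := ⟨⟨0, hd⟩⟩
  have hzx : 0 < z x := by
    obtain ⟨i₀⟩ := hNE
    have h1 := hbpos i₀
    obtain ⟨hp, hm⟩ := neighbor_mem hx i₀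
    have h2 := zInf_nonneg hA hp
    have h3 := zInf_nonneg hA hm
    simp only [DC, ← hz] at h1
    linarith
  have hd' : (0:ℝ) < (d:ℝ) := by exact_mod_cast Nat.lt_of_lt_of_le Nat.zero_lt_one hd
  set θ : ℝ := max 2⁻¹ ((g / P) ^ ((d:ℝ)⁻¹)) with hθ
  have hθ0 : 0 < θ := lt_of_lt_of_le (by norm_num) (le_max_left _ _)
  have hθ1 : θ < 1 := by
    apply max_lt (by norm_num)
    exact Real.rpow_lt_one (div_nonneg hg0 hPpos.le) ((div_lt_one hPpos).2 hcon)
      (by positivity)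
  have hθP : g ≤ θ ^ d * P := by
    have h1 : ((g / P) ^ ((d:ℝ)⁻¹)) ^ d = g / P :=
      Real.rpow_inv_natCast_pow (div_nonneg hg0 hPpos.le) (by omega)
    have h2 : g / P ≤ θ ^ d := by
      rw [← h1]
      exact pow_le_pow_left₀ (Real.rpow_nonneg (div_nonneg hg0 hPpos.le) _)
        (le_max_right _ _) d
    calc g = g / P * P := (div_mul_cancel₀ g (ne_of_gt hPpos)).symm
      _ ≤ θ ^ d * P := mul_le_mul_of_nonneg_right h2 hPpos.le
  set m : ℝ := Finset.univ.inf' Finset.univ_nonempty (fun i => -(DC d z i x)) with hm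
  have hm_le : ∀ i : Fin d, m ≤ -(DC d z i x) := fun i =>
    Finset.inf'_le _ (Finset.mem_univ i)
  have hm_pos : 0 < m := by
    rw [hm, Finset.lt_inf'_iff]
    exact fun i _ => hbpos i
  set δ : ℝ := min ((1 - θ) * m / 2) (z x) with hδ
  have hδ0 : 0 < δ := lt_min (by nlinarith) hzx
  have hδzx : δ ≤ z x := min_le_right _ _
  have hδb : ∀ i : Fin d, 2 * δ ≤ (1 - θ) * (-(DC d z i x)) := by
    intro i
    have h1 : δ ≤ (1 - θ) * m / 2 := min_le_left _ _
    nlinarith [hm_le i]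
  set z' : Zd d → ℝ := fun y => if y = x then z x - δ else z y with hz'
  have hz'x : z' x = z x - δ := if_pos rfl
  have hz'ne : ∀ y : Zd d, y ≠ x → z' y = z y := fun y hy => if_neg hy
  have hz'le : ∀ y : Zd d, z' y ≤ z y := by
    intro y
    by_cases hy : y = x
    · rw [hy, hz'x]; linarith
    · rw [hz'ne y hy]
  have hne_p : ∀ i : Fin d, x + eZ d i ≠ x := by
    intro i h
    exact eZ_ne_zero d i (add_eq_left.mp h)
  have hne_m : ∀ i : Fin d, x - eZ d i ≠ x := by
    intro i h
    exact eZ_ne_zero d i (sub_eq_self.mp h)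
  have hDCx : ∀ i : Fin d, DC d z' i x = DC d z i x + 2 * δ := by
    intro i
    simp only [DC, hz'x, hz'ne _ (hne_p i), hz'ne _ (hne_m i)]
    ring
  have hDCother : ∀ y : Zd d, y ≠ x → ∀ i : Fin d, DC d z' i y ≤ DC d z i y := by
    intro y hy i
    simp only [DC, hz'ne y hy]
    have h1 := hz'le (y + eZ d i)
    have h2 := hz'le (y - eZ d i)
    linarith
  have hz'DC : ∀ y : Zd d, normOne y < (n:ℤ) → ∀ i : Fin d, DC d z' i y ≤ 0 := by
    intro y hy i
    by_cases hyx : y = x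
    · subst hyx
      rw [hDCx i]
      have := hδb i
      nlinarith [hbnn i, hθ1]
    · exact le_trans (hDCother y hyx i) (zInf_DC hA hy i)
  have hz'mem : memA d n ω f z' := by
    refine ⟨(isConcaveD_iff_DC _).2 hz'DC, ?_, ?_, ?_⟩
    · intro y hy
      by_cases hyx : y = x
      · rw [hyx, hz'x]; linarith
      · rw [hz'ne y hyx]; exact zInf_nonneg hA hy
    · intro y hy
      have hyx : y ≠ x := by
        intro h
        rw [h] at hy
        omega
      rw [hz'ne y hyx]
      exact zInf_boundary hA hy
    · intro y hy
      rw [le_rpow_inv_iff_nat hd (hF0 y hy) (abs_nonneg _),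
        abs_MA_of_concave fun i => hz'DC y hy i]
      by_cases hyx : y = x
      · subst hyx
        calc (f y / cfun d ω y) ^ d = g := rfl
          _ ≤ θ ^ d * P := hθP
          _ = ∏ i : Fin d, (θ * (-(DC d z i y))) := by
              rw [Finset.prod_mul_distrib, Finset.prod_const, ← hP]
              simp [Finset.card_univ]
          _ ≤ ∏ i : Fin d, -(DC d z' i y) := by
              apply Finset.prod_le_prod (fun i _ => mul_nonneg hθ0.le (hbnn i))
              intro i _
              rw [hDCx i]
              have := hδb i
              nlinarith
      · calc (f y / cfun d ω y) ^ d
            ≤ ∏ i : Fin d, -(DC d z i y) := zInf_prod_ge hd hA hF0 hy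
          _ ≤ ∏ i : Fin d, -(DC d z' i y) := by
              apply Finset.prod_le_prod (fun i _ => neg_nonneg.2 (zInf_DC hA hy i))
              intro i _
              have := hDCother y hyx i
              linarith
  have := zInf_le hz'mem (le_of_lt hx)
  rw [hz'x, ← hz] at this
  linarith


/-- Uniqueness principle: there is a unique `z ∈ 𝒜(ω,f)` (unique as a function on `D_n`)
with `|Mz(x)|^{1/d} = f(x)/c(ω,x)` on `D_n°`. -/
theorem stmt4 (d n : ℕ) (hd : 1 ≤ d) (hn : 1 ≤ n) (ω : Env d) (hell : Elliptic d ω)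
    (f : Zd d → ℝ)
    (hf0 : ∀ x : Zd d, normOne x ≤ (n : ℤ) → 0 ≤ f x)
    (hfb : ∀ x : Zd d, normOne x = (n : ℤ) → f x = 0) :
    ∃ z : Zd d → ℝ,
      (memA d n ω f z ∧
        ∀ x : Zd d, normOne x < (n : ℤ) →
          |MA d z x| ^ ((d : ℝ)⁻¹) = f x / cfun d ω x) ∧
      ∀ z' : Zd d → ℝ,
        (memA d n ω f z' ∧
          ∀ x : Zd d, normOne x < (n : ℤ) →
            |MA d z' x| ^ ((d : ℝ)⁻¹) = f x / cfun d ω x) →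
        ∀ x : Zd d, normOne x ≤ (n : ℤ) → z' x = z x := by
  
  have hF0 : ∀ x : Zd d, normOne x < (n:ℤ) → 0 ≤ f x / cfun d ω x :=
    fun x hx => div_nonneg (hf0 x hx.le) (cfun_pos hell x).le
  obtain ⟨K₀, hK₀⟩ :=
    (((finite_Dn d n).image fun x => f x / cfun d ω x)).bddAbove
  set K : ℝ := max 1 K₀ with hKdef
  have hK1 : (1:ℝ) ≤ K := le_max_left _ _
  have hK : ∀ x : Zd d, normOne x < (n:ℤ) → f x / cfun d ω x ≤ 2 * K := by
    intro x hx
    have h1 : f x / cfun d ω x ≤ K₀ := hK₀ ⟨x, hx.le, rfl⟩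
    have h2 : K₀ ≤ K := le_max_right _ _
    linarith
  have hA : {w : Zd d → ℝ | memA d n ω f w}.Nonempty :=
    ⟨_, barrier_mem hd ω f K hK1 hF0 hK⟩
  set z := zInf d n ω f with hzdef
  have hzmem := zInf_mem hd hA hF0
  have hzeq : ∀ x : Zd d, normOne x < (n:ℤ) →
      |MA d z x| ^ ((d:ℝ)⁻¹) = f x / cfun d ω x := by
    intro x hx
    refine le_antisymm ?_ (hzmem.2.2.2 x hx)
    rw [abs_MA_of_concave fun i => zInf_DC hA hx i]
    have h1 : ∏ i : Fin d, -(DC d z i x) ≤ (f x / cfun d ω x) ^ d :=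
      zInf_prod_le hd hA hF0 hx
    calc (∏ i : Fin d, -(DC d z i x)) ^ ((d:ℝ)⁻¹)
        ≤ ((f x / cfun d ω x) ^ d) ^ ((d:ℝ)⁻¹) :=
          Real.rpow_le_rpow (Finset.prod_nonneg fun i _ => neg_nonneg.2 (zInf_DC hA hx i))
            h1 (by positivity)
      _ = f x / cfun d ω x := Real.pow_rpow_inv_natCast (hF0 x hx) (by omega)
  refine ⟨z, ⟨hzmem, hzeq⟩, ?_⟩
  rintro z' ⟨hz'mem, hz'eq⟩ x hx
  have hMeq : ∀ y : Zd d, normOne y < (n:ℤ) → |MA d z' y| = |MA d z y| := by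
    intro y hy
    have h3 : |MA d z' y| ^ ((d:ℝ)⁻¹) = |MA d z y| ^ ((d:ℝ)⁻¹) :=
      (hz'eq y hy).trans (hzeq y hy).symm
    calc |MA d z' y| = (|MA d z' y| ^ ((d:ℝ)⁻¹)) ^ d :=
          (Real.rpow_inv_natCast_pow (abs_nonneg _) (by omega)).symm
      _ = (|MA d z y| ^ ((d:ℝ)⁻¹)) ^ d := by rw [h3]
      _ = |MA d z y| := Real.rpow_inv_natCast_pow (abs_nonneg _) (by omega)
  have hbz : ∀ y : Zd d, normOne y = (n:ℤ) → z y = 0 := fun y hy => zInf_boundary hA hy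
  have hbz' : ∀ y : Zd d, normOne y = (n:ℤ) → z' y = 0 := hz'mem.2.2.1
  refine le_antisymm ?_ ?_
  · exact comparison hd hn z' z (zInf_concave hA)
      (fun y hy => by rw [hbz y hy, hbz' y hy])
      (fun y hy => le_of_eq (hMeq y hy)) x hx
  · exact comparison hd hn z z' hz'mem.1
      (fun y hy => by rw [hbz y hy, hbz' y hy])
      (fun y hy => ge_of_eq (hMeq y hy)) x hx
end
end

section
/- There is a constant c₃ > 1 depending only on d with the following property: for every n ≥ 1, every elliptic environment ω, every f : D_n → [0,∞) with f ≡ 0 on ∂D_n, and every concave function z : D_n → [0,∞) with z ≡ 0 on ∂D_n satisfying |Mz(x)|^{1/d} = f(x)/c(ω,x) for all x ∈ D_n°, one has ‖z‖_∞ ≤ c₃ n² ‖f/c(ω,·)‖_{d,D_n}, where ‖z‖_∞ = max_{x∈D_n} |z(x)| and ‖h‖_{d,D_n} = (|D_n|^{-1} Σ_{x∈D_n} |h(x)|^d)^{1/d}. -/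
open MeasureTheory Filter Topology
open scoped ENNReal NNReal

noncomputable section

/-- `D_n` as a finite set of lattice points. -/
def Dfin (d n : ℕ) : Finset (Zd d) :=
  (Finset.Icc (fun _ => -(n : ℤ)) fun _ => (n : ℤ)).filter fun x => normOne x ≤ (n : ℤ)

/-- `‖h‖_{d,D_n} = (|D_n|⁻¹ Σ_{x ∈ D_n} |h(x)|^d)^{1/d}`. -/
def lpD (d n : ℕ) (h : Zd d → ℝ) : ℝ :=
  (((Dfin d n).card : ℝ)⁻¹ * ∑ x ∈ Dfin d n, |h x| ^ d) ^ ((d : ℝ)⁻¹)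


namespace S6

lemma normOne_nonneg {d : ℕ} (x : Zd d) : 0 ≤ normOne x :=
  Finset.sum_nonneg fun j _ => abs_nonneg _

lemma abs_le_normOne {d : ℕ} (x : Zd d) (i : Fin d) : |x i| ≤ normOne x :=
  Finset.single_le_sum (fun j (_ : j ∈ Finset.univ) => abs_nonneg (x j)) (Finset.mem_univ i)

lemma normOne_add_le {d : ℕ} (x y : Zd d) : normOne (x + y) ≤ normOne x + normOne y := by
  unfold normOne
  rw [← Finset.sum_add_distrib]
  exact Finset.sum_le_sum fun i _ => abs_add_le _ _

lemma normOne_sub_le {d : ℕ} (x y : Zd d) : normOne (x - y) ≤ normOne x + normOne y := by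
  unfold normOne
  rw [← Finset.sum_add_distrib]
  exact Finset.sum_le_sum fun i _ => abs_sub _ _

lemma normOne_eZ {d : ℕ} (i : Fin d) : normOne (eZ d i) = 1 := by
  unfold normOne eZ
  rw [Finset.sum_eq_single i]
  · simp
  · intro b _ hb; simp [Pi.single_apply, hb]
  · simp

lemma mem_Dfin {d n : ℕ} {x : Zd d} : x ∈ Dfin d n ↔ normOne x ≤ (n : ℤ) := by
  constructor
  · intro h; exact (Finset.mem_filter.1 h).2
  · intro h
    refine Finset.mem_filter.2 ⟨Finset.mem_Icc.2 ⟨fun i => ?_, fun i => ?_⟩, h⟩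
    · exact (abs_le.1 ((abs_le_normOne x i).trans h)).1
    · exact (abs_le.1 ((abs_le_normOne x i).trans h)).2

lemma zero_mem_Dfin {d n : ℕ} : (0 : Zd d) ∈ Dfin d n := by
  refine mem_Dfin.2 ?_
  unfold normOne
  simp

lemma add_eZ_mem {d n : ℕ} {x : Zd d} (hx : normOne x < (n : ℤ)) (i : Fin d) :
    x + eZ d i ∈ Dfin d n :=
  mem_Dfin.2 (by have := normOne_add_le x (eZ d i); rw [normOne_eZ] at this; omega)

lemma sub_eZ_mem {d n : ℕ} {x : Zd d} (hx : normOne x < (n : ℤ)) (i : Fin d) :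
    x - eZ d i ∈ Dfin d n := by
  refine mem_Dfin.2 ?_
  have := normOne_sub_le x (eZ d i)
  rw [normOne_eZ] at this; omega

lemma dot_eZ {d : ℕ} (p : Fin d → ℝ) (i : Fin d) :
    ∑ j, p j * ((eZ d i j : ℤ) : ℝ) = p i := by
  rw [Finset.sum_eq_single i]
  · simp [eZ]
  · intro b _ hb; simp [eZ, Pi.single_apply, hb]
  · simp

lemma card_Dfin_le {d n : ℕ} : (Dfin d n).card ≤ (2 * n + 1) ^ d := by
  have h1 : (Dfin d n).card ≤ (Finset.Icc (fun _ => -(n : ℤ)) fun _ => (n : ℤ)).card :=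
    Finset.card_le_card (Finset.filter_subset _ _)
  rwa [Pi.card_Icc, Finset.prod_const, Int.card_Icc, Finset.card_univ, Fintype.card_fin,
    show ((n : ℤ) + 1 - -(n : ℤ)).toNat = 2 * n + 1 by omega] at h1

lemma DC_nonpos {d n : ℕ} {z : Zd d → ℝ} (hconc : IsConcaveD d n z)
    {x : Zd d} (hx : normOne x < (n : ℤ)) (i : Fin d) : DC d z i x ≤ 0 :=
  hconc x hx (eZ d i) ⟨i, Or.inl rfl⟩

/-- Key discrete ABP inequality. -/
lemma key {d n : ℕ} (hd : 1 ≤ d) (hn : 1 ≤ n) (z : Zd d → ℝ)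
    (hconc : IsConcaveD d n z)
    (hzb : ∀ x : Zd d, normOne x = (n : ℤ) → z x = 0)
    {x₀ : Zd d} (hx₀ : x₀ ∈ Dfin d n) (hmax : ∀ y ∈ Dfin d n, z y ≤ z x₀)
    (hM : 0 < z x₀) :
    (z x₀ / (2 * n)) ^ d ≤
      ∑ x ∈ (Dfin d n).filter (fun x => normOne x < (n : ℤ)),
        ∏ i, (-(DC d z i x)) := by
  classical
  set M := z x₀ with hMdef
  set s : ℝ := M / (4 * n) with hs
  have hnR : (0 : ℝ) < n := by exact_mod_cast hn
  have hspos : 0 < s := by positivity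
  set Dint := (Dfin d n).filter (fun x => normOne x < (n : ℤ)) with hDint
  set B : Set (Fin d → ℝ) := Set.univ.pi fun _ => Set.Icc (-s) s with hB
  set Box : Zd d → Set (Fin d → ℝ) := fun x =>
    Set.univ.pi fun i => Set.Icc (z (x + eZ d i) - z x) (z x - z (x - eZ d i)) with hBox
  -- covering
  have hcover : B ⊆ ⋃ x ∈ Dint, Box x := by
    intro p hp
    have hpb : ∀ i, |p i| ≤ s := by
      intro i
      have := hp i (Set.mem_univ i)
      exact abs_le.2 ⟨this.1, this.2⟩
    -- maximize y ↦ z y - p·y over Dfin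
    obtain ⟨x, hxD, hxmax⟩ := Finset.exists_max_image (Dfin d n)
      (fun y => z y - ∑ i, p i * ((y i : ℤ) : ℝ)) ⟨0, zero_mem_Dfin⟩
    have hxint : normOne x < (n : ℤ) := by
      by_contra hcon
      have hxn : normOne x = (n : ℤ) := le_antisymm (mem_Dfin.1 hxD) (not_lt.1 hcon)
      have hzx : z x = 0 := hzb x hxn
      have h1 := hxmax x₀ hx₀
      simp only [hzx] at h1
      -- M - Σ p x₀ ≤ - Σ p x
      have h2 : M ≤ ∑ i, p i * ((x₀ i : ℤ) : ℝ) - ∑ i, p i * ((x i : ℤ) : ℝ) := by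
        linarith [h1]
      have h3 : ∑ i, p i * ((x₀ i : ℤ) : ℝ) - ∑ i, p i * ((x i : ℤ) : ℝ)
          = ∑ i, p i * (((x₀ i : ℤ) : ℝ) - ((x i : ℤ) : ℝ)) := by
        rw [← Finset.sum_sub_distrib]
        exact Finset.sum_congr rfl fun i _ => by ring
      have h4 : ∀ i, p i * (((x₀ i : ℤ) : ℝ) - ((x i : ℤ) : ℝ))
          ≤ s * |((x₀ i - x i : ℤ) : ℝ)| := by
        intro i
        calc p i * (((x₀ i : ℤ) : ℝ) - ((x i : ℤ) : ℝ))
            ≤ |p i * (((x₀ i : ℤ) : ℝ) - ((x i : ℤ) : ℝ))| := le_abs_self _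
          _ = |p i| * |((x₀ i - x i : ℤ) : ℝ)| := by rw [abs_mul]; push_cast; ring_nf
          _ ≤ s * |((x₀ i - x i : ℤ) : ℝ)| :=
              mul_le_mul_of_nonneg_right (hpb i) (abs_nonneg _)
      have h5 : ∑ i, s * |((x₀ i - x i : ℤ) : ℝ)| = s * ((normOne (x₀ - x) : ℤ) : ℝ) := by
        rw [← Finset.mul_sum]
        congr 1
        unfold normOne
        simp only [Pi.sub_apply]
        push_cast
        rfl
      have h6 : normOne (x₀ - x) ≤ 2 * (n : ℤ) := by
        have := normOne_sub_le x₀ x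
        have h7 := mem_Dfin.1 hx₀
        omega
      have h8 : M ≤ s * (2 * (n : ℝ)) := by
        calc M ≤ ∑ i, p i * (((x₀ i : ℤ) : ℝ) - ((x i : ℤ) : ℝ)) := h3 ▸ h2
          _ ≤ ∑ i, s * |((x₀ i - x i : ℤ) : ℝ)| := Finset.sum_le_sum fun i _ => h4 i
          _ = s * ((normOne (x₀ - x) : ℤ) : ℝ) := h5
          _ ≤ s * (2 * (n : ℝ)) := by
              refine mul_le_mul_of_nonneg_left ?_ hspos.le
              exact_mod_cast h6
      rw [hs] at h8
      have h9 : M / (4 * (n:ℝ)) * (2 * (n:ℝ)) = M / 2 := by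
        field_simp
        ring
      rw [h9] at h8
      linarith
    refine Set.mem_biUnion (Finset.mem_filter.2 ⟨hxD, hxint⟩) ?_
    intro i _
    constructor
    · -- z(x+e_i) - z x ≤ p i
      have h1 := hxmax (x + eZ d i) (add_eZ_mem hxint i)
      have h2 : ∑ j, p j * (((x + eZ d i) j : ℤ) : ℝ)
          = (∑ j, p j * ((x j : ℤ) : ℝ)) + p i := by
        rw [← dot_eZ p i, ← Finset.sum_add_distrib]
        refine Finset.sum_congr rfl fun j _ => ?_
        have : ((x + eZ d i) j : ℤ) = x j + eZ d i j := rfl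
        rw [this]; push_cast; ring
      rw [h2] at h1
      linarith
    · -- p i ≤ z x - z(x-e_i)
      have h1 := hxmax (x - eZ d i) (sub_eZ_mem hxint i)
      have h2 : ∑ j, p j * (((x - eZ d i) j : ℤ) : ℝ)
          = (∑ j, p j * ((x j : ℤ) : ℝ)) - p i := by
        rw [← dot_eZ p i, ← Finset.sum_sub_distrib]
        refine Finset.sum_congr rfl fun j _ => ?_
        have : ((x - eZ d i) j : ℤ) = x j - eZ d i j := rfl
        rw [this]; push_cast; ring
      rw [h2] at h1
      linarith
  -- volume comparison
  have hvolB : volume B = ENNReal.ofReal ((M / (2 * n)) ^ d) := by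
    rw [hB, volume_pi_pi]
    simp only [Real.volume_Icc]
    rw [Finset.prod_const, Finset.card_univ, Fintype.card_fin,
      ← ENNReal.ofReal_pow (by linarith)]
    congr 2
    rw [hs]; ring
  have hvolBox : ∀ x ∈ Dint, volume (Box x) = ENNReal.ofReal (∏ i, (-(DC d z i x))) := by
    intro x hx
    have hxint : normOne x < (n : ℤ) := (Finset.mem_filter.1 hx).2
    rw [hBox, volume_pi_pi]
    simp only [Real.volume_Icc]
    rw [ENNReal.ofReal_prod_of_nonneg]
    · exact Finset.prod_congr rfl fun i _ => by unfold DC; congr 1; ring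
    · intro i _
      have := DC_nonpos hconc hxint i
      linarith
  have hmeas : volume B ≤ ∑ x ∈ Dint, volume (Box x) :=
    (measure_mono hcover).trans (measure_biUnion_finset_le Dint Box)
  rw [hvolB] at hmeas
  have hsum : ∑ x ∈ Dint, volume (Box x)
      = ENNReal.ofReal (∑ x ∈ Dint, ∏ i, (-(DC d z i x))) := by
    rw [ENNReal.ofReal_sum_of_nonneg]
    · exact (Finset.sum_congr rfl hvolBox)
    · intro x hx
      refine Finset.prod_nonneg fun i _ => ?_
      have := DC_nonpos hconc (Finset.mem_filter.1 hx).2 i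
      linarith
  rw [hsum] at hmeas
  refine (ENNReal.ofReal_le_ofReal_iff ?_).1 hmeas
  refine Finset.sum_nonneg fun x hx => Finset.prod_nonneg fun i _ => ?_
  have := DC_nonpos hconc (Finset.mem_filter.1 hx).2 i
  linarith



lemma cfun_pos {d : ℕ} {ω : Env d} (hω : Elliptic d ω) (x : Zd d) : 0 < cfun d ω x := by
  unfold cfun
  apply Real.rpow_pos_of_pos
  apply Finset.prod_pos
  intro v hv
  exact hω x v (Finset.mem_of_mem_erase hv) (Finset.ne_of_mem_erase hv)

end S6

/-- The maximum principle bound `‖z‖_∞ ≤ c₃ n² ‖f/c(ω,·)‖_{d,D_n}` for solutions of the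
discrete Monge–Ampère equation. -/
theorem stmt6 (d : ℕ) (hd : 1 ≤ d) :
    ∃ c₃ : ℝ, 1 < c₃ ∧
      ∀ n : ℕ, 1 ≤ n →
        ∀ ω : Env d, Elliptic d ω →
          ∀ f : Zd d → ℝ,
            (∀ x : Zd d, normOne x ≤ (n : ℤ) → 0 ≤ f x) →
            (∀ x : Zd d, normOne x = (n : ℤ) → f x = 0) →
            ∀ z : Zd d → ℝ, IsConcaveD d n z →
              (∀ x : Zd d, normOne x ≤ (n : ℤ) → 0 ≤ z x) →
              (∀ x : Zd d, normOne x = (n : ℤ) → z x = 0) →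
              (∀ x : Zd d, normOne x < (n : ℤ) →
                |MA d z x| ^ ((d : ℝ)⁻¹) = f x / cfun d ω x) →
              ∀ x : Zd d, normOne x ≤ (n : ℤ) →
                |z x| ≤ c₃ * (n : ℝ) ^ 2 * lpD d n (fun y => f y / cfun d ω y) := by
  classical
  refine ⟨6, by norm_num, ?_⟩
  intro n hn ω hω f hf0 hfb z hconc hz0 hzb heq x hx
  set h : Zd d → ℝ := fun y => f y / cfun d ω y with hh
  have hd0 : (d : ℝ) ≠ 0 := Nat.cast_ne_zero.2 (by omega)
  have hnR : (0 : ℝ) < n := by exact_mod_cast hn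
  have hlp : 0 ≤ lpD d n h := by unfold lpD; positivity
  obtain ⟨x₀, hx₀D, hx₀max⟩ := Finset.exists_max_image (Dfin d n) z ⟨0, S6.zero_mem_Dfin⟩
  have hxD : x ∈ Dfin d n := S6.mem_Dfin.2 hx
  have hzxle : z x ≤ z x₀ := hx₀max x hxD
  have habs : |z x| = z x := abs_of_nonneg (hz0 x hx)
  rcases le_or_gt (z x₀) 0 with hM | hM
  · have hz00 : z x = 0 := le_antisymm (hzxle.trans hM) (hz0 x hx)
    rw [habs, hz00]
    have : (0:ℝ) ≤ 6 * (n:ℝ)^2 := by positivity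
    exact mul_nonneg this hlp
  · have hkey := S6.key hd hn z hconc hzb hx₀D hx₀max hM
    set S : ℝ := ∑ y ∈ Dfin d n, |h y| ^ d with hS
    have hSn : (0:ℝ) ≤ S := by rw [hS]; positivity
    have hpt : ∀ y ∈ (Dfin d n).filter (fun y => normOne y < (n : ℤ)),
        ∏ i, (-(DC d z i y)) = |h y| ^ d := by
      intro y hy
      have hyint := (Finset.mem_filter.1 hy).2
      have h1 : ∏ i, (-(DC d z i y)) = |MA d z y| := by
        unfold MA
        rw [Finset.abs_prod]
        exact Finset.prod_congr rfl fun i _ =>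
          (abs_of_nonpos (S6.DC_nonpos hconc hyint i)).symm
      have h4 : h y = |MA d z y| ^ ((d:ℝ)⁻¹) := (heq y hyint).symm
      rw [h1, h4, abs_of_nonneg (Real.rpow_nonneg (abs_nonneg _) _),
        ← Real.rpow_natCast (|MA d z y| ^ ((d:ℝ)⁻¹)) d,
        ← Real.rpow_mul (abs_nonneg _), inv_mul_cancel₀ hd0, Real.rpow_one]
    rw [Finset.sum_congr rfl hpt] at hkey
    have hsub : ∑ y ∈ (Dfin d n).filter (fun y => normOne y < (n : ℤ)), |h y| ^ d ≤ S :=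
      Finset.sum_le_sum_of_subset_of_nonneg (Finset.filter_subset _ _)
        (fun y _ _ => by positivity)
    have hABP : (z x₀ / (2 * n)) ^ d ≤ S := hkey.trans hsub
    have hq : z x₀ / (2 * n) ≤ S ^ ((d:ℝ)⁻¹) := by
      have h5 := Real.rpow_le_rpow (by positivity) hABP (by positivity : (0:ℝ) ≤ (d:ℝ)⁻¹)
      rwa [Real.pow_rpow_inv_natCast (by positivity) (by omega)] at h5
    have hcard : ((Dfin d n).card : ℝ) ≤ (3 * (n:ℝ)) ^ d := by
      have h1 := S6.card_Dfin_le (d := d) (n := n)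
      have h2 : (Dfin d n).card ≤ (3 * n) ^ d :=
        h1.trans (Nat.pow_le_pow_left (by omega) d)
      calc ((Dfin d n).card : ℝ) ≤ (((3 * n) ^ d : ℕ) : ℝ) := by exact_mod_cast h2
        _ = (3 * (n:ℝ)) ^ d := by push_cast; ring
    have hcard0 : (0:ℝ) < ((Dfin d n).card : ℝ) := by
      exact_mod_cast Finset.card_pos.2 ⟨0, S6.zero_mem_Dfin⟩
    have hSroot : S ^ ((d:ℝ)⁻¹) ≤ 3 * n * lpD d n h := by
      have h1 : ((3 * (n:ℝ)) ^ d)⁻¹ * S ≤ (((Dfin d n).card : ℝ))⁻¹ * S := by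
        refine mul_le_mul_of_nonneg_right ?_ hSn
        exact inv_anti₀ hcard0 hcard
      have h2 := Real.rpow_le_rpow (by positivity) h1 (by positivity : (0:ℝ) ≤ (d:ℝ)⁻¹)
      rw [Real.mul_rpow (by positivity) hSn, Real.inv_rpow (by positivity),
        Real.pow_rpow_inv_natCast (by positivity) (by omega)] at h2
      have h3 : (3 * (n:ℝ))⁻¹ * S ^ ((d:ℝ)⁻¹) ≤ lpD d n h := by
        unfold lpD
        rw [← hS]
        exact h2
      calc S ^ ((d:ℝ)⁻¹) = 3 * (n:ℝ) * ((3 * (n:ℝ))⁻¹ * S ^ ((d:ℝ)⁻¹)) := by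
            field_simp
        _ ≤ 3 * (n:ℝ) * lpD d n h := by
            exact mul_le_mul_of_nonneg_left h3 (by positivity)
    have hfin : z x₀ ≤ 2 * (n:ℝ) * (S ^ ((d:ℝ)⁻¹)) := by
      rw [div_le_iff₀ (by positivity)] at hq
      linarith
    rw [habs]
    calc z x ≤ z x₀ := hzxle
      _ ≤ 2 * (n:ℝ) * (S ^ ((d:ℝ)⁻¹)) := hfin
      _ ≤ 2 * (n:ℝ) * (3 * (n:ℝ) * lpD d n h) :=
          mul_le_mul_of_nonneg_left hSroot (by positivity)
      _ = 6 * (n:ℝ) ^ 2 * lpD d n h := by ring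
end
end

section
/- There is a constant c₂ > 1 depending only on d with the following property: for every n ≥ 1, every balanced elliptic environment ω, and every f : D_n → [0,∞), letting τ_n = inf{m ≥ 0 : X(m) ∈ ∂D_n} be the exit time of the random walk X in the environment ω and Qf(x) = E_x^ω[Σ_{k=0}^{τ_n} f(X(k))] for x ∈ D_n°, one has sup_{x ∈ D_n°} Qf(x) ≤ c₂ n² ‖f/c(ω,·)‖_{d,D_n}, where ‖h‖_{d,D_n} = (|D_n|^{-1} Σ_{x∈D_n} |h(x)|^d)^{1/d}. -/
open MeasureTheory Filter Topology
open scoped ENNReal NNReal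

noncomputable section

/-- `P` is the quenched law `P_{x₀}^ω` of the random walk in the environment `ω` started at
`x₀`. -/
def IsQuenchedLaw (d : ℕ) (ω : Env d) (x₀ : Zd d) (P : Measure (ℕ → Zd d)) : Prop :=
  IsProbabilityMeasure P ∧
  ∀ (n : ℕ) (y : ℕ → Zd d),
    P {X | ∀ k ≤ n, X k = y k} =
      (if y 0 = x₀ then
          ∏ k ∈ Finset.range n, ENNReal.ofReal ((ω (y k)).1 (y (k + 1) - y k))
        else 0)

/-- The exit time `τ_n = inf {m : X(m) ∈ ∂D_n}`, with value `⊤` if the walk never exits. -/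
def exitT (d n : ℕ) (X : ℕ → Zd d) : ℕ∞ :=
  sInf ((fun k : ℕ => (k : ℕ∞)) '' {k : ℕ | normOne (X k) = (n : ℤ)})

/-- `Qf(x) = E_x^ω[Σ_{k=0}^{τ_n} f(X(k))]`, as a lower integral against the quenched law. -/
def Qf (d n : ℕ) (f : Zd d → ℝ) (P : Measure (ℕ → Zd d)) : ℝ≥0∞ :=
  ∫⁻ X, (∑' k : ℕ,
    Set.indicator {k : ℕ | (k : ℕ∞) ≤ exitT d n X}
      (fun k => ENNReal.ofReal (f (X k))) k) ∂P

/-! ### Auxiliary development for the Green-function bound -/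

namespace GF

variable {d : ℕ}

lemma normOne_nonneg (x : Zd d) : 0 ≤ normOne x :=
  Finset.sum_nonneg fun i _ => abs_nonneg _

lemma abs_le_normOne (x : Zd d) (i : Fin d) : |x i| ≤ normOne x :=
  Finset.single_le_sum (fun j _ => abs_nonneg (x j)) (Finset.mem_univ i)

lemma normOne_add_le (x y : Zd d) : normOne (x + y) ≤ normOne x + normOne y := by
  unfold normOne
  rw [← Finset.sum_add_distrib]
  exact Finset.sum_le_sum fun i _ => abs_add_le _ _

lemma normOne_neg (x : Zd d) : normOne (-x) = normOne x := by
  unfold normOne; simp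

lemma eZ_apply (i j : Fin d) : eZ d i j = if j = i then 1 else 0 := by
  simp [eZ, Pi.single_apply]

lemma normOne_eZ (i : Fin d) : normOne (eZ d i) = 1 := by
  unfold normOne
  have : ∀ j, |eZ d i j| = if j = i then 1 else 0 := by
    intro j; rw [eZ_apply]; split <;> simp
  simp [this]

lemma eZ_ne_zero (i : Fin d) : eZ d i ≠ 0 := by
  intro h
  have := congrFun h i
  rw [eZ_apply] at this; simp at this

lemma neg_eZ_ne_zero (i : Fin d) : -eZ d i ≠ 0 := by
  intro h
  have : eZ d i = 0 := by
    have := congrArg Neg.neg h; simpa using this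
  exact eZ_ne_zero i this

lemma eZ_injective : Function.Injective (eZ d) := by
  intro i j h
  by_contra hij
  have := congrFun h i
  rw [eZ_apply, eZ_apply] at this
  simp [hij] at this

lemma eZ_ne_neg_eZ (i j : Fin d) : eZ d i ≠ -eZ d j := by
  intro h
  have h1 := congrFun h i
  rw [eZ_apply, if_pos rfl, Pi.neg_apply, eZ_apply] at h1
  split at h1 <;> omega

lemma mem_Vfin_iff (v : Zd d) :
    v ∈ Vfin d ↔ (∃ i, v = eZ d i) ∨ (∃ i, v = -eZ d i) ∨ v = 0 := by
  unfold Vfin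
  simp [Finset.mem_union, Finset.mem_image, eq_comm]
  tauto

lemma zero_mem_Vfin : (0 : Zd d) ∈ Vfin d := by
  rw [mem_Vfin_iff]; right; right; rfl

lemma eZ_mem_Vfin (i : Fin d) : eZ d i ∈ Vfin d := by
  rw [mem_Vfin_iff]; exact Or.inl ⟨i, rfl⟩

lemma neg_eZ_mem_Vfin (i : Fin d) : -eZ d i ∈ Vfin d := by
  rw [mem_Vfin_iff]; exact Or.inr (Or.inl ⟨i, rfl⟩)

lemma normOne_le_one_of_mem_Vfin {v : Zd d} (hv : v ∈ Vfin d) : normOne v ≤ 1 := by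
  rw [mem_Vfin_iff] at hv
  rcases hv with ⟨i, rfl⟩ | ⟨i, rfl⟩ | rfl
  · rw [normOne_eZ]
  · rw [normOne_neg, normOne_eZ]
  · unfold normOne; simp

/-- Sum over `Vfin` decomposes into the three pieces. -/
lemma sum_Vfin {M : Type*} [AddCommMonoid M] (g : Zd d → M) :
    ∑ v ∈ Vfin d, g v =
      (∑ i : Fin d, g (eZ d i)) + (∑ i : Fin d, g (-eZ d i)) + g 0 := by
  unfold Vfin
  rw [Finset.sum_union, Finset.sum_union, Finset.sum_image, Finset.sum_image,
    Finset.sum_singleton]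
  · intro i _ j _ h
    exact eZ_injective (neg_injective h)
  · intro i _ j _ h; exact eZ_injective h
  · rw [Finset.disjoint_left]
    rintro v hv hv'
    simp only [Finset.mem_image, Finset.mem_univ, true_and] at hv hv'
    obtain ⟨i, rfl⟩ := hv
    obtain ⟨j, hj⟩ := hv'
    exact eZ_ne_neg_eZ i j hj.symm
  · rw [Finset.disjoint_left]
    rintro v hv hv'
    simp only [Finset.mem_union, Finset.mem_image, Finset.mem_univ, true_and,
      Finset.mem_singleton] at hv hv'
    subst hv'
    rcases hv with ⟨i, hi⟩ | ⟨i, hi⟩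
    · exact eZ_ne_zero i hi
    · exact neg_eZ_ne_zero i hi

/-- Product over `Vfin \ {0}` decomposes into two pieces. -/
lemma prod_Vfin_erase (g : Zd d → ℝ) :
    ∏ v ∈ (Vfin d).erase 0, g v =
      (∏ i : Fin d, g (eZ d i)) * (∏ i : Fin d, g (-eZ d i)) := by
  have herase : (Vfin d).erase 0 =
      (Finset.univ.image fun i : Fin d => eZ d i) ∪
        (Finset.univ.image fun i : Fin d => -eZ d i) := by
    unfold Vfin
    rw [Finset.union_comm _ {0}, Finset.erase_union_distrib]
    rw [Finset.erase_singleton, Finset.empty_union]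
    apply Finset.erase_eq_of_notMem
    simp only [Finset.mem_union, Finset.mem_image, Finset.mem_univ, true_and]
    rintro (⟨i, hi⟩ | ⟨i, hi⟩)
    · exact eZ_ne_zero i hi
    · exact neg_eZ_ne_zero i hi
  rw [herase, Finset.prod_union, Finset.prod_image, Finset.prod_image]
  · intro i _ j _ h
    exact eZ_injective (neg_injective h)
  · intro i _ j _ h; exact eZ_injective h
  · rw [Finset.disjoint_left]
    rintro v hv hv'
    simp only [Finset.mem_image, Finset.mem_univ, true_and] at hv hv'
    obtain ⟨i, rfl⟩ := hv
    obtain ⟨j, hj⟩ := hv'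
    exact eZ_ne_neg_eZ i j hj.symm

lemma mem_Dfin_iff {n : ℕ} (y : Zd d) : y ∈ Dfin d n ↔ normOne y ≤ (n : ℤ) := by
  unfold Dfin
  rw [Finset.mem_filter, Finset.mem_Icc]
  constructor
  · rintro ⟨-, h⟩; exact h
  · intro h
    refine ⟨⟨fun i => ?_, fun i => ?_⟩, h⟩
    · have := (abs_le.mp ((abs_le_normOne y i).trans h)).1; exact this
    · exact (abs_le.mp ((abs_le_normOne y i).trans h)).2

lemma Dfin_nonempty (d n : ℕ) : (Dfin d n).Nonempty :=
  ⟨0, by rw [mem_Dfin_iff]; unfold normOne; simp⟩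

lemma card_Dfin_le (d n : ℕ) : (Dfin d n).card ≤ (2 * n + 1) ^ d := by
  unfold Dfin
  calc ((Finset.Icc (fun _ => -(n:ℤ)) fun _ => (n:ℤ)).filter _).card
      ≤ (Finset.Icc (fun _ => -(n:ℤ)) fun _ => (n:ℤ)).card := Finset.card_filter_le _ _
    _ = (2 * n + 1) ^ d := by
        rw [Pi.card_Icc]
        simp only [Int.card_Icc]
        rw [Finset.prod_const, Finset.card_univ, Fintype.card_fin]
        congr 1
        omega

/-- Add/subtract a signed basis vector in the direction that increases the norm. -/
lemma normOne_add_single (x : Zd d) (i : Fin d) (c : ℤ) :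
    normOne (x + Pi.single i c) = |x i + c| - |x i| + normOne x := by
  have hupd : x + Pi.single i c = Function.update x i (x i + c) := by
    funext j
    rcases eq_or_ne j i with rfl | hji
    · simp
    · simp [Pi.single_apply, hji, Function.update_of_ne hji]
  unfold normOne
  rw [hupd]
  rw [show ∀ g : Zd d, ∑ j, |g j| = ∑ j, (fun z : Zd d => |z j|) g from fun g => rfl]
  have h1 : ∑ j, |Function.update x i (x i + c) j| =
      |x i + c| + ∑ j ∈ Finset.univ \ {i}, |x j| := by
    have := Finset.sum_update_of_mem (Finset.mem_univ i) (fun j => |x j|) |x i + c|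
    rw [← this]
    apply Finset.sum_congr rfl
    intro j _
    rcases eq_or_ne j i with rfl | hji
    · simp
    · simp [Function.update_of_ne hji]
  have h2 : ∑ j, |x j| = |x i| + ∑ j ∈ Finset.univ \ {i}, |x j| := by
    have := Finset.sum_update_of_mem (Finset.mem_univ i) (fun j => |x j|) |x i|
    rw [← this]
    apply Finset.sum_congr rfl
    intro j _
    rcases eq_or_ne j i with rfl | hji
    · simp
    · simp [Function.update_of_ne hji]
  rw [h1, h2]
  ring

lemma normOne_step_pos (x : Zd d) (i : Fin d) (h : 0 ≤ x i) :
    normOne (x + eZ d i) = normOne x + 1 := by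
  unfold eZ
  rw [normOne_add_single]
  rw [abs_of_nonneg h, abs_of_nonneg (by omega : (0:ℤ) ≤ x i + 1)]
  ring

lemma normOne_step_neg (x : Zd d) (i : Fin d) (h : x i ≤ 0) :
    normOne (x + -eZ d i) = normOne x + 1 := by
  have : x + -eZ d i = x + Pi.single i (-1) := by
    funext j; simp [eZ, Pi.single_apply]; split <;> ring
  rw [this, normOne_add_single]
  rw [abs_of_nonpos h, abs_of_nonpos (by omega : x i + (-1) ≤ 0)]
  ring

/-- The open domain as a finite set. -/
def Dint (d n : ℕ) : Finset (Zd d) :=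
  (Dfin d n).filter fun x => normOne x < (n : ℤ)

lemma mem_Dint_iff {n : ℕ} (x : Zd d) : x ∈ Dint d n ↔ normOne x < (n : ℤ) := by
  unfold Dint
  rw [Finset.mem_filter, mem_Dfin_iff]
  exact ⟨fun h => h.2, fun h => ⟨le_of_lt h, h⟩⟩

section Env

variable {ω : Env d}

lemma w_nonneg (ω : Env d) (x v : Zd d) : 0 ≤ (ω x).1 v := (ω x).2.1 v

lemma w_zero (ω : Env d) (x : Zd d) {v : Zd d} (h : v ∉ Vfin d) : (ω x).1 v = 0 :=
  (ω x).2.2.1 v h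

lemma w_sum (ω : Env d) (x : Zd d) : ∑ v ∈ Vfin d, (ω x).1 v = 1 := (ω x).2.2.2

lemma w_le_one (ω : Env d) (x v : Zd d) : (ω x).1 v ≤ 1 := by
  by_cases h : v ∈ Vfin d
  · rw [← w_sum ω x]
    exact Finset.single_le_sum (fun u _ => w_nonneg ω x u) h
  · rw [w_zero ω x h]; exact zero_le_one

/-- Maximum principle with propagation to the boundary: a subharmonic function vanishing
outside the interior is nonpositive. -/
lemma subharm_nonpos (hd : 1 ≤ d) {n : ℕ} {ω : Env d} (hell : Elliptic d ω)
    (g : Zd d → ℝ)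
    (hg0 : ∀ y : Zd d, ¬ normOne y < (n : ℤ) → g y = 0)
    (hsub : ∀ x : Zd d, normOne x < (n : ℤ) →
      g x ≤ ∑ v ∈ Vfin d, (ω x).1 v * g (x + v)) :
    ∀ y, g y ≤ 0 := by
  have hne : ((Dfin d n).image g).Nonempty := (Dfin_nonempty d n).image g
  set M := ((Dfin d n).image g).max' hne with hMdef
  have hM : ∀ y : Zd d, normOne y ≤ (n : ℤ) → g y ≤ M := by
    intro y hy
    exact Finset.le_max' _ _ (Finset.mem_image.mpr ⟨y, (mem_Dfin_iff y).mpr hy, rfl⟩)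
  by_cases hMpos : M ≤ 0
  · intro y
    by_cases hy : normOne y < (n : ℤ)
    · exact (hM y hy.le).trans hMpos
    · rw [hg0 y hy]
  push_neg at hMpos
  exfalso
  have claim : ∀ m : ℕ, ∀ x : Zd d, normOne x < (n : ℤ) → g x = M →
      ((n : ℤ) - normOne x).toNat ≤ m → False := by
    intro m
    induction m with
    | zero =>
      intro x hx _ hm
      omega
    | succ m ih =>
      intro x hx hgx hm
      have key : ∀ v ∈ Vfin d, g (x + v) ≤ M := by
        intro v hv
        refine hM _ ?_
        have := normOne_add_le x v
        have := normOne_le_one_of_mem_Vfin hv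
        omega
      have hsum0 : ∑ v ∈ Vfin d, (ω x).1 v * (M - g (x + v)) = 0 := by
        have hexp : ∑ v ∈ Vfin d, (ω x).1 v * (M - g (x + v)) =
            M - ∑ v ∈ Vfin d, (ω x).1 v * g (x + v) := by
          have : ∑ v ∈ Vfin d, (ω x).1 v * (M - g (x + v)) =
              (∑ v ∈ Vfin d, (ω x).1 v) * M - ∑ v ∈ Vfin d, (ω x).1 v * g (x + v) := by
            rw [Finset.sum_mul, ← Finset.sum_sub_distrib]
            apply Finset.sum_congr rfl
            intro v _; ring
          rw [this, w_sum ω x, one_mul]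
        rw [hexp]
        apply le_antisymm
        · have := hsub x hx
          rw [← hgx] at *
          linarith [hsub x hx]
        · rw [← hexp]
          apply Finset.sum_nonneg
          intro v hv
          exact mul_nonneg (w_nonneg ω x v) (by linarith [key v hv])
      have hall := (Finset.sum_eq_zero_iff_of_nonneg (fun v hv =>
        mul_nonneg (w_nonneg ω x v) (by linarith [key v hv]))).mp hsum0
      set i0 : Fin d := ⟨0, hd⟩
      by_cases hsign : 0 ≤ x i0
      · -- step in direction +e_{i0}
        have hvmem := eZ_mem_Vfin (d := d) i0
        have hω : 0 < (ω x).1 (eZ d i0) := hell x _ hvmem (eZ_ne_zero i0)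
        have hgeq : g (x + eZ d i0) = M := by
          have := hall _ hvmem
          rcases mul_eq_zero.mp this with h | h
          · exact absurd h (ne_of_gt hω)
          · linarith
        have hnorm := normOne_step_pos x i0 hsign
        by_cases hlt : normOne (x + eZ d i0) < (n : ℤ)
        · exact ih (x + eZ d i0) hlt hgeq (by omega)
        · have := hg0 _ hlt
          rw [hgeq] at this
          linarith
      · have hvmem := neg_eZ_mem_Vfin (d := d) i0
        have hω : 0 < (ω x).1 (-eZ d i0) := hell x _ hvmem (neg_eZ_ne_zero i0)
        have hgeq : g (x + -eZ d i0) = M := by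
          have := hall _ hvmem
          rcases mul_eq_zero.mp this with h | h
          · exact absurd h (ne_of_gt hω)
          · linarith
        have hnorm := normOne_step_neg x i0 (by omega)
        by_cases hlt : normOne (x + -eZ d i0) < (n : ℤ)
        · exact ih (x + -eZ d i0) hlt hgeq (by omega)
        · have := hg0 _ hlt
          rw [hgeq] at this
          linarith
  obtain ⟨y, hy, hgy⟩ := Finset.mem_image.mp (Finset.max'_mem _ hne)
  rw [mem_Dfin_iff] at hy
  have hylt : normOne y < (n : ℤ) := by
    rcases lt_or_eq_of_le hy with h | h
    · exact h
    · exfalso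
      have := hg0 y (by omega)
      rw [this] at hgy
      exact absurd hgy.symm (by linarith)
  exact claim ((n : ℤ) - normOne y).toNat y hylt hgy le_rfl

/-- Existence of a nonnegative solution of `u = f + P u` on the interior, vanishing
outside. -/
lemma exists_solution (hd : 1 ≤ d) (n : ℕ) (ω : Env d) (hell : Elliptic d ω)
    (f : Zd d → ℝ) (hf : ∀ x, 0 ≤ f x) :
    ∃ u : Zd d → ℝ, (∀ y : Zd d, ¬ normOne y < (n : ℤ) → u y = 0) ∧ (∀ y, 0 ≤ u y) ∧
      ∀ x : Zd d, normOne x < (n : ℤ) →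
        u x = f x + ∑ v ∈ Vfin d, (ω x).1 v * u (x + v) := by
  classical
  set S := Dint d n with hS
  let ext : ({x // x ∈ S} → ℝ) → Zd d → ℝ := fun w y => if h : y ∈ S then w ⟨y, h⟩ else 0
  have ext_add : ∀ w w' y, ext (w + w') y = ext w y + ext w' y := by
    intro w w' y
    simp only [ext]
    split <;> simp
  have ext_smul : ∀ (c : ℝ) w y, ext (c • w) y = c * ext w y := by
    intro c w y
    simp only [ext]
    split <;> simp
  let T : ({x // x ∈ S} → ℝ) →ₗ[ℝ] ({x // x ∈ S} → ℝ) :=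
    { toFun := fun w x => ext w x.1 - ∑ v ∈ Vfin d, (ω x.1).1 v * ext w (x.1 + v)
      map_add' := by
        intro w w'
        funext x
        simp only [ext_add, Pi.add_apply, mul_add, Finset.sum_add_distrib]
        ring
      map_smul' := by
        intro c w
        funext x
        simp only [ext_smul, Pi.smul_apply, smul_eq_mul, RingHom.id_apply]
        have hsum : ∑ v ∈ Vfin d, (ω x.1).1 v * (c * ext w (x.1 + v)) =
            c * ∑ v ∈ Vfin d, (ω x.1).1 v * ext w (x.1 + v) := by
          rw [Finset.mul_sum]
          exact Finset.sum_congr rfl fun v _ => by ring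
        rw [hsum]
        ring }
  have ext_zero : ∀ w y, y ∉ S → ext w y = 0 := by
    intro w y hy
    simp only [ext, dif_neg hy]
  have Tinj : Function.Injective T := by
    intro w w' hww'
    have hzero : T (w - w') = 0 := by rw [map_sub, hww', sub_self]
    set g := ext (w - w') with hg
    have hgeq : ∀ x : Zd d, normOne x < (n : ℤ) →
        g x = ∑ v ∈ Vfin d, (ω x).1 v * g (x + v) := by
      intro x hx
      have hxS : x ∈ S := (mem_Dint_iff x).mpr hx
      have := congrFun hzero ⟨x, hxS⟩
      simp only [T, LinearMap.coe_mk, AddHom.coe_mk, Pi.zero_apply] at this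
      linarith [this]
    have hg0 : ∀ y : Zd d, ¬ normOne y < (n : ℤ) → g y = 0 := by
      intro y hy
      exact ext_zero _ y (fun hmem => hy ((mem_Dint_iff y).mp hmem))
    have h1 : ∀ y, g y ≤ 0 :=
      subharm_nonpos hd hell g hg0 (fun x hx => (hgeq x hx).le)
    have h2 : ∀ y, -g y ≤ 0 := by
      refine subharm_nonpos hd hell (fun y => -g y)
        (fun y hy => by show -g y = 0; rw [hg0 y hy]; ring)
        (fun x hx => ?_)
      have : ∑ v ∈ Vfin d, (ω x).1 v * -g (x + v) =
          -∑ v ∈ Vfin d, (ω x).1 v * g (x + v) := by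
        rw [← Finset.sum_neg_distrib]
        exact Finset.sum_congr rfl fun v _ => by ring
      rw [this, ← hgeq x hx]
    have hgz : ∀ y, g y = 0 := fun y => le_antisymm (h1 y) (by linarith [h2 y])
    have : w - w' = 0 := by
      funext x
      have := hgz x.1
      simp only [g, ext, dif_pos x.2] at this
      simpa using this
    exact sub_eq_zero.mp this
  have Tsurj : Function.Surjective T := (LinearMap.injective_iff_surjective).mp Tinj
  obtain ⟨w, hw⟩ := Tsurj (fun x => f x.1)
  refine ⟨ext w, ?_, ?_, ?_⟩
  · intro y hy
    exact ext_zero _ y (fun hmem => hy ((mem_Dint_iff y).mp hmem))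
  · -- nonnegativity via the minimum principle
    have hequ : ∀ x : Zd d, normOne x < (n : ℤ) →
        ext w x = f x + ∑ v ∈ Vfin d, (ω x).1 v * ext w (x + v) := by
      intro x hx
      have hxS : x ∈ S := (mem_Dint_iff x).mpr hx
      have := congrFun hw ⟨x, hxS⟩
      simp only [T, LinearMap.coe_mk, AddHom.coe_mk] at this
      linarith [this]
    have hneg : ∀ y, -ext w y ≤ 0 := by
      refine subharm_nonpos hd hell (fun y => -ext w y)
        (fun y hy => by
          show -ext w y = 0
          rw [ext_zero _ y (fun hmem => hy ((mem_Dint_iff y).mp hmem))]; ring)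
        (fun x hx => ?_)
      show -ext w x ≤ ∑ v ∈ Vfin d, (ω x).1 v * -ext w (x + v)
      have hrw : ∑ v ∈ Vfin d, (ω x).1 v * -ext w (x + v) =
          -∑ v ∈ Vfin d, (ω x).1 v * ext w (x + v) := by
        rw [← Finset.sum_neg_distrib]
        exact Finset.sum_congr rfl fun v _ => by ring
      rw [hrw]
      have := hequ x hx
      have hfx := hf x
      linarith
    intro y
    linarith [hneg y]
  · intro x hx
    have hxS : x ∈ S := (mem_Dint_iff x).mpr hx
    have := congrFun hw ⟨x, hxS⟩
    simp only [T, LinearMap.coe_mk, AddHom.coe_mk] at this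
    linarith [this]

lemma lpD_nonneg (d n : ℕ) (h : Zd d → ℝ) : 0 ≤ lpD d n h := by
  unfold lpD
  apply Real.rpow_nonneg
  apply mul_nonneg (by positivity)
  exact Finset.sum_nonneg fun x _ => by positivity

lemma cfun_pos {ω : Env d} (hell : Elliptic d ω) (x : Zd d) : 0 < cfun d ω x := by
  unfold cfun
  apply Real.rpow_pos_of_pos
  apply Finset.prod_pos
  intro v hv
  exact hell x v (Finset.mem_of_mem_erase hv) (Finset.ne_of_mem_erase hv)

lemma cfun_le_one (ω : Env d) (x : Zd d) : cfun d ω x ≤ 1 := by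
  unfold cfun
  apply Real.rpow_le_one
  · exact Finset.prod_nonneg fun v _ => w_nonneg ω x v
  · exact Finset.prod_le_one (fun v _ => w_nonneg ω x v) (fun v _ => w_le_one ω x v)
  · positivity

lemma cfun_balanced (hd : 1 ≤ d) {ω : Env d} (hbal : BalancedEnv d ω) (x : Zd d) :
    cfun d ω x = (∏ i : Fin d, (ω x).1 (eZ d i)) ^ ((d : ℝ)⁻¹) := by
  unfold cfun
  rw [prod_Vfin_erase]
  have hpe : ∏ i : Fin d, (ω x).1 (-eZ d i) = ∏ i : Fin d, (ω x).1 (eZ d i) :=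
    Finset.prod_congr rfl fun i _ => (hbal x i).symm
  rw [hpe]
  set t := ∏ i : Fin d, (ω x).1 (eZ d i) with ht
  have htnn : 0 ≤ t := Finset.prod_nonneg fun i _ => w_nonneg ω x _
  have h2 : t * t = t ^ (2 : ℝ) := by
    rw [show (2:ℝ) = ((2:ℕ):ℝ) by norm_num, Real.rpow_natCast]
    ring
  rw [h2, ← Real.rpow_mul htnn]
  congr 1
  have hdne : (d : ℝ) ≠ 0 := by positivity
  field_simp

lemma cfun_pow_d (hd : 1 ≤ d) {ω : Env d} (hbal : BalancedEnv d ω) (x : Zd d) :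
    cfun d ω x ^ d = ∏ i : Fin d, (ω x).1 (eZ d i) := by
  rw [cfun_balanced hd hbal x]
  exact Real.rpow_inv_natCast_pow
    (Finset.prod_nonneg fun i _ => w_nonneg ω x _) (by omega)

lemma card_lpD_pow (d n : ℕ) (h : Zd d → ℝ) (hd : 1 ≤ d) :
    ∑ x ∈ Dfin d n, |h x| ^ d = ((Dfin d n).card : ℝ) * lpD d n h ^ d := by
  unfold lpD
  have hcard : (0:ℝ) < ((Dfin d n).card : ℝ) := by
    have := (Dfin_nonempty d n).card_pos
    positivity
  rw [Real.rpow_inv_natCast_pow ?hnn (by omega)]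
  · field_simp
  case hnn =>
    apply mul_nonneg (by positivity)
    exact Finset.sum_nonneg fun x _ => by positivity

/-- Pointwise `f/c` is controlled by the normalized `ℓ^d` norm. -/
lemma pointwise_le_lpD (hd : 1 ≤ d) {n : ℕ} {ω : Env d} (hell : Elliptic d ω)
    {f : Zd d → ℝ} (hf : ∀ x, 0 ≤ f x) {y : Zd d} (hy : y ∈ Dfin d n) :
    f y / cfun d ω y ≤ (2 * (n:ℝ) + 1) * lpD d n (fun z => f z / cfun d ω z) := by
  set L := lpD d n (fun z => f z / cfun d ω z) with hL
  have hLnn : 0 ≤ L := lpD_nonneg d n _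
  have hc := cfun_pos hell y
  have htnn : 0 ≤ f y / cfun d ω y := div_nonneg (hf y) hc.le
  have hsingle : (f y / cfun d ω y) ^ d ≤ ∑ x ∈ Dfin d n, |f x / cfun d ω x| ^ d := by
    have : (f y / cfun d ω y) ^ d = |f y / cfun d ω y| ^ d := by
      rw [abs_of_nonneg htnn]
    rw [this]
    exact Finset.single_le_sum (f := fun x => |f x / cfun d ω x| ^ d)
      (fun x _ => by positivity) hy
  rw [card_lpD_pow d n _ hd] at hsingle
  have hcard : ((Dfin d n).card : ℝ) ≤ (2 * (n:ℝ) + 1) ^ d := by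
    have h1 := card_Dfin_le d n
    calc ((Dfin d n).card : ℝ) ≤ (((2 * n + 1) ^ d : ℕ) : ℝ) := by exact_mod_cast h1
      _ = (2 * (n:ℝ) + 1) ^ d := by push_cast; ring
  have hfinal : (f y / cfun d ω y) ^ d ≤ ((2 * (n:ℝ) + 1) * L) ^ d := by
    calc (f y / cfun d ω y) ^ d ≤ ((Dfin d n).card : ℝ) * L ^ d := hsingle
      _ ≤ (2 * (n:ℝ) + 1) ^ d * L ^ d := by
          apply mul_le_mul_of_nonneg_right hcard (by positivity)
      _ = ((2 * (n:ℝ) + 1) * L) ^ d := (mul_pow _ _ _).symm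
  exact (pow_le_pow_iff_left₀ htnn (by positivity) (by omega)).mp hfinal

set_option maxHeartbeats 1000000 in
/-- The discrete ABP estimate: the solution is bounded by `(9/2) n² ‖f/c‖_{d,D_n}`. -/
lemma abp (hd : 1 ≤ d) {n : ℕ} (hn : 1 ≤ n) {ω : Env d}
    (hbal : BalancedEnv d ω) (hell : Elliptic d ω)
    {f : Zd d → ℝ} (hf : ∀ x, 0 ≤ f x)
    {u : Zd d → ℝ}
    (hu0 : ∀ y : Zd d, ¬ normOne y < (n : ℤ) → u y = 0)
    (hunn : ∀ y, 0 ≤ u y)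
    (hueq : ∀ x : Zd d, normOne x < (n : ℤ) →
      u x = f x + ∑ v ∈ Vfin d, (ω x).1 v * u (x + v)) :
    ∀ y : Zd d, u y ≤ (9/2) * (n:ℝ)^2 * lpD d n (fun z => f z / cfun d ω z) := by
  classical
  set L := lpD d n (fun z => f z / cfun d ω z) with hLdef
  have hLnn : 0 ≤ L := lpD_nonneg d n _
  have hne : ((Dfin d n).image u).Nonempty := (Dfin_nonempty d n).image u
  set M := ((Dfin d n).image u).max' hne with hMdef
  have hM : ∀ y : Zd d, normOne y ≤ (n : ℤ) → u y ≤ M := by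
    intro y hy
    exact Finset.le_max' _ _ (Finset.mem_image.mpr ⟨y, (mem_Dfin_iff y).mpr hy, rfl⟩)
  have hMnn : 0 ≤ M := by
    have h0 : normOne (0 : Zd d) = 0 := by unfold normOne; simp
    exact le_trans (hunn 0) (hM 0 (by omega))
  -- key claim : M ≤ (9/2) n² L
  have key : M ≤ (9/2) * (n:ℝ)^2 * L := by
    rcases eq_or_lt_of_le hMnn with hM0 | hMpos
    · rw [← hM0]; positivity
    set r := M / (3 * (n:ℝ)) with hrdef
    have hnpos : (0:ℝ) < n := by exact_mod_cast hn
    have hrpos : 0 < r := by positivity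
    -- the slope sets
    set S : Zd d → Set (Fin d → ℝ) := fun x =>
      {s | ∀ y ∈ Dfin d n, u y - ∑ i, s i * (y i : ℝ) ≤ u x - ∑ i, s i * (x i : ℝ)}
      with hSdef
    -- covering of the cube by slope sets of interior points
    have hcover : (Set.univ.pi fun _ : Fin d => Set.Icc (-r) r) ⊆
        ⋃ x ∈ Dint d n, S x := by
      intro s hs
      have hsb : ∀ i, |s i| ≤ r := by
        intro i
        have := hs i (Set.mem_univ i)
        rw [Set.mem_Icc] at this
        exact abs_le.mpr this
      have hdot : ∀ y : Zd d, y ∈ Dfin d n → |∑ i, s i * (y i : ℝ)| ≤ M / 3 := by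
        intro y hy
        have h1 : |∑ i, s i * (y i : ℝ)| ≤ ∑ i, r * |(y i : ℝ)| := by
          refine (Finset.abs_sum_le_sum_abs _ _).trans (Finset.sum_le_sum fun i _ => ?_)
          rw [abs_mul]
          exact mul_le_mul_of_nonneg_right (hsb i) (abs_nonneg _)
        have h2 : ∑ i, r * |(y i : ℝ)| = r * ((normOne y : ℤ) : ℝ) := by
          rw [← Finset.mul_sum]
          congr 1
          unfold normOne
          push_cast
          rfl
        have h3 : ((normOne y : ℤ) : ℝ) ≤ (n : ℝ) := by
          exact_mod_cast (mem_Dfin_iff y).mp hy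
        calc |∑ i, s i * (y i : ℝ)| ≤ r * ((normOne y : ℤ) : ℝ) := h1.trans_eq h2
          _ ≤ r * n := by
              exact mul_le_mul_of_nonneg_left h3 hrpos.le
          _ = M / 3 := by
              rw [hrdef]; field_simp
      obtain ⟨x, hxD, hmax⟩ := Finset.exists_max_image (Dfin d n)
        (fun y => u y - ∑ i, s i * (y i : ℝ)) (Dfin_nonempty d n)
      have hxint : x ∈ Dint d n := by
        rw [mem_Dint_iff]
        by_contra hxn
        have hxeq : normOne x = (n : ℤ) := le_antisymm ((mem_Dfin_iff x).mp hxD) (by omega)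
        have hux : u x = 0 := hu0 x (by omega)
        obtain ⟨y₀, hy₀D, huy₀⟩ := Finset.mem_image.mp (Finset.max'_mem _ hne)
        have h1 := hmax y₀ hy₀D
        have h2 := hdot y₀ hy₀D
        have h3 := hdot x hxD
        rw [hux] at h1
        rw [huy₀] at h1
        have := abs_le.mp h2
        have := abs_le.mp h3
        linarith
      exact Set.mem_biUnion hxint (hmax : _)
    -- volume estimates
    have hvol1 : (ENNReal.ofReal (2 * r)) ^ d =
        volume (Set.univ.pi fun _ : Fin d => Set.Icc (-r) r) := by
      rw [volume_pi_pi]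
      simp only [Real.volume_Icc]
      rw [Finset.prod_const, Finset.card_univ, Fintype.card_fin]
      congr 1
      ring
    have hvol2 : volume (⋃ x ∈ Dint d n, S x) ≤
        ∑ x ∈ Dint d n, volume (S x) := measure_biUnion_finset_le _ _
    -- each slope set is inside a box
    set b : Fin d → Zd d → ℝ := fun i x => 2 * u x - u (x + eZ d i) - u (x - eZ d i)
      with hbdef
    have hSsub : ∀ x ∈ Dint d n, volume (S x) ≤
        ENNReal.ofReal (∏ i, max (b i x) 0) := by
      intro x hx
      have hxlt : normOne x < (n : ℤ) := (mem_Dint_iff x).mp hx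
      have hsub : S x ⊆ Set.univ.pi fun i =>
          Set.Icc (u (x + eZ d i) - u x) (u x - u (x - eZ d i)) := by
        intro s hs i _
        have hmemp : x + eZ d i ∈ Dfin d n := by
          rw [mem_Dfin_iff]
          have := normOne_add_le x (eZ d i)
          have := normOne_eZ (d := d) i
          omega
        have hmemm : x - eZ d i ∈ Dfin d n := by
          rw [mem_Dfin_iff]
          have := normOne_add_le x (-eZ d i)
          have := normOne_neg (eZ d i)
          have := normOne_eZ (d := d) i
          rw [sub_eq_add_neg]
          omega
        have hdiffp : (∑ j, s j * (((x + eZ d i) j : ℤ) : ℝ)) -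
            (∑ j, s j * ((x j : ℤ) : ℝ)) = s i := by
          rw [← Finset.sum_sub_distrib]
          have : ∀ j, s j * (((x + eZ d i) j : ℤ) : ℝ) - s j * ((x j : ℤ) : ℝ) =
              if j = i then s j else 0 := by
            intro j
            rw [show (x + eZ d i) j = x j + eZ d i j from rfl, eZ_apply]
            rcases eq_or_ne j i with h | h
            · simp only [if_pos h]; push_cast; ring
            · simp only [if_neg h]; push_cast; ring
          rw [Finset.sum_congr rfl fun j _ => this j, Finset.sum_ite_eq']
          simp
        have hdiffm : (∑ j, s j * (((x - eZ d i) j : ℤ) : ℝ)) -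
            (∑ j, s j * ((x j : ℤ) : ℝ)) = -s i := by
          rw [← Finset.sum_sub_distrib]
          have : ∀ j, s j * (((x - eZ d i) j : ℤ) : ℝ) - s j * ((x j : ℤ) : ℝ) =
              if j = i then -s j else 0 := by
            intro j
            rw [show (x - eZ d i) j = x j - eZ d i j from rfl, eZ_apply]
            rcases eq_or_ne j i with h | h
            · simp only [if_pos h]; push_cast; ring
            · simp only [if_neg h]; push_cast; ring
          rw [Finset.sum_congr rfl fun j _ => this j, Finset.sum_ite_eq']
          simp
        have h1 := hs _ hmemp
        have h2 := hs _ hmemm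
        rw [Set.mem_Icc]
        constructor <;> nlinarith [h1, h2, hdiffp, hdiffm]
      calc volume (S x) ≤ volume (Set.univ.pi fun i =>
          Set.Icc (u (x + eZ d i) - u x) (u x - u (x - eZ d i))) := measure_mono hsub
        _ = ∏ i, ENNReal.ofReal ((u x - u (x - eZ d i)) - (u (x + eZ d i) - u x)) := by
            rw [volume_pi_pi]
            exact Finset.prod_congr rfl fun i _ => Real.volume_Icc
        _ ≤ ENNReal.ofReal (∏ i, max (b i x) 0) := by
            rw [ENNReal.ofReal_prod_of_nonneg (fun i _ => le_max_right _ _)]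
            apply Finset.prod_le_prod' fun i _ => ?_
            apply ENNReal.ofReal_le_ofReal
            have : (u x - u (x - eZ d i)) - (u (x + eZ d i) - u x) = b i x := by
              rw [hbdef]; ring
            rw [this]
            exact le_max_left _ _
    -- pointwise product bound at interior points
    have hprod : ∀ x ∈ Dint d n, (∏ i, max (b i x) 0) ≤ (f x / cfun d ω x) ^ d := by
      intro x hx
      have hxlt : normOne x < (n : ℤ) := (mem_Dint_iff x).mp hx
      have hc := cfun_pos hell x
      by_cases hall : ∀ i, 0 ≤ b i x
      case neg =>
        push_neg at hall
        obtain ⟨i, hi⟩ := hall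
        rw [Finset.prod_eq_zero (Finset.mem_univ i) (by rw [max_eq_right hi.le])]
        exact pow_nonneg (div_nonneg (hf x) hc.le) d
      case pos =>
      have hmaxeq : ∀ i : Fin d, max (b i x) 0 = b i x := fun i => max_eq_left (hall i)
      rw [Finset.prod_congr rfl fun i _ => hmaxeq i]
      -- the balanced equation : f x = ∑ i ω(e_i) b i x
      have heqn : f x = ∑ i, (ω x).1 (eZ d i) * b i x := by
        have h1 := hueq x hxlt
        have h2 : ∑ v ∈ Vfin d, (ω x).1 v * u (x + v) =
            (∑ i, (ω x).1 (eZ d i) * u (x + eZ d i)) +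
            (∑ i, (ω x).1 (eZ d i) * u (x - eZ d i)) + (ω x).1 0 * u x := by
          rw [sum_Vfin (fun v => (ω x).1 v * u (x + v))]
          congr 2
          · apply Finset.sum_congr rfl
            intro i _
            rw [← hbal x i, sub_eq_add_neg]
          · rw [add_zero]
        have h3 : (1:ℝ) = (∑ i, (ω x).1 (eZ d i)) + (∑ i, (ω x).1 (eZ d i)) +
            (ω x).1 0 := by
          rw [← w_sum ω x, sum_Vfin (fun v => (ω x).1 v)]
          congr 2
          exact Finset.sum_congr rfl fun i _ => (hbal x i).symm
        have h4 : u x * (1:ℝ) = u x := mul_one _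
        calc f x = u x - ∑ v ∈ Vfin d, (ω x).1 v * u (x + v) := by linarith [h1]
          _ = u x * ((∑ i, (ω x).1 (eZ d i)) + (∑ i, (ω x).1 (eZ d i)) + (ω x).1 0)
              - ((∑ i, (ω x).1 (eZ d i) * u (x + eZ d i)) +
                (∑ i, (ω x).1 (eZ d i) * u (x - eZ d i)) + (ω x).1 0 * u x) := by
              rw [h2, ← h3, mul_one]
          _ = (∑ i, (ω x).1 (eZ d i) * (2 * u x)) -
              (∑ i, (ω x).1 (eZ d i) * (u (x + eZ d i) + u (x - eZ d i))) := by
              have e1 : ∑ i, (ω x).1 (eZ d i) * (2 * u x)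
                  = (∑ i, (ω x).1 (eZ d i)) * (2 * u x) := by rw [Finset.sum_mul]
              have e2 : ∑ i, (ω x).1 (eZ d i) * (u (x + eZ d i) + u (x - eZ d i))
                  = (∑ i, (ω x).1 (eZ d i) * u (x + eZ d i)) +
                    ∑ i, (ω x).1 (eZ d i) * u (x - eZ d i) := by
                rw [← Finset.sum_add_distrib]
                exact Finset.sum_congr rfl fun i _ => by ring
              rw [e1, e2]
              ring
          _ = ∑ i, (ω x).1 (eZ d i) * b i x := by
              rw [← Finset.sum_sub_distrib]
              apply Finset.sum_congr rfl
              intro i _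
              rw [hbdef]
              ring
      -- AM-GM
      have hdpos : (0:ℝ) < d := by exact_mod_cast hd
      have hamgm : (∏ i, ((d:ℝ) * (ω x).1 (eZ d i) * b i x)) ^ ((d:ℝ)⁻¹) ≤ f x := by
        have := Real.geom_mean_le_arith_mean_weighted Finset.univ
          (fun _ : Fin d => (d:ℝ)⁻¹) (fun i => (d:ℝ) * (ω x).1 (eZ d i) * b i x)
          (fun i _ => by positivity)
          (by rw [Finset.sum_const, Finset.card_univ, Fintype.card_fin, nsmul_eq_mul]
              field_simp)
          (fun i _ => by
            have := w_nonneg ω x (eZ d i)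
            have := hall i
            positivity)
        rw [Real.finset_prod_rpow _ _ (fun i _ => by
          have := w_nonneg ω x (eZ d i)
          have := hall i
          positivity) _] at this
        refine this.trans_eq ?_
        rw [heqn]
        apply Finset.sum_congr rfl
        intro i _
        field_simp
      have hprodnn : 0 ≤ ∏ i, ((d:ℝ) * (ω x).1 (eZ d i) * b i x) := by
        apply Finset.prod_nonneg
        intro i _
        have := w_nonneg ω x (eZ d i)
        have := hall i
        positivity
      have hpow : ∏ i, ((d:ℝ) * (ω x).1 (eZ d i) * b i x) ≤ f x ^ d := by
        have h5 : ((∏ i, ((d:ℝ) * (ω x).1 (eZ d i) * b i x)) ^ ((d:ℝ)⁻¹)) ^ d =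
            ∏ i, ((d:ℝ) * (ω x).1 (eZ d i) * b i x) :=
          Real.rpow_inv_natCast_pow hprodnn (by omega)
        calc ∏ i, ((d:ℝ) * (ω x).1 (eZ d i) * b i x)
            = ((∏ i, ((d:ℝ) * (ω x).1 (eZ d i) * b i x)) ^ ((d:ℝ)⁻¹)) ^ d := h5.symm
          _ ≤ f x ^ d := by
              apply pow_le_pow_left₀ (Real.rpow_nonneg hprodnn _) hamgm
      have hsplit : ∏ i, ((d:ℝ) * (ω x).1 (eZ d i) * b i x) =
          (d:ℝ) ^ d * (∏ i, (ω x).1 (eZ d i)) * ∏ i, b i x := by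
        rw [Finset.prod_mul_distrib, Finset.prod_mul_distrib, Finset.prod_const,
          Finset.card_univ, Fintype.card_fin]
      have hwpos : 0 < ∏ i, (ω x).1 (eZ d i) := by
        apply Finset.prod_pos
        intro i _
        exact hell x _ (eZ_mem_Vfin i) (eZ_ne_zero i)
      have hcd : cfun d ω x ^ d = ∏ i, (ω x).1 (eZ d i) := cfun_pow_d hd hbal x
      rw [hsplit] at hpow
      rw [div_pow]
      rw [le_div_iff₀ (by positivity)]
      calc (∏ i, b i x) * cfun d ω x ^ d
          ≤ (d:ℝ)^d * ((∏ i, b i x) * cfun d ω x ^ d) := by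
            have h1d : (1:ℝ) ≤ (d:ℝ) ^ d :=
              one_le_pow₀ (show (1:ℝ) ≤ (d:ℝ) by exact_mod_cast hd)
            have ht : 0 ≤ (∏ i, b i x) * cfun d ω x ^ d :=
              mul_nonneg (Finset.prod_nonneg fun i _ => hall i) (pow_nonneg hc.le d)
            nlinarith [h1d, ht]
        _ = (d:ℝ) ^ d * (∏ i, (ω x).1 (eZ d i)) * ∏ i, b i x := by rw [hcd]; ring
        _ ≤ f x ^ d := hpow
    -- put the volume chain together
    have hchain : ENNReal.ofReal ((2*r) ^ d) ≤
        ENNReal.ofReal (∑ x ∈ Dint d n, (f x / cfun d ω x) ^ d) := by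
      rw [ENNReal.ofReal_pow (by positivity), ENNReal.ofReal_sum_of_nonneg
        (fun x _ => pow_nonneg (div_nonneg (hf x) (cfun_pos hell x).le) d)]
      calc (ENNReal.ofReal (2*r)) ^ d
          = volume (Set.univ.pi fun _ : Fin d => Set.Icc (-r) r) := hvol1
        _ ≤ volume (⋃ x ∈ Dint d n, S x) := measure_mono hcover
        _ ≤ ∑ x ∈ Dint d n, volume (S x) := hvol2
        _ ≤ ∑ x ∈ Dint d n, ENNReal.ofReal ((f x / cfun d ω x) ^ d) := by
            apply Finset.sum_le_sum
            intro x hx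
            exact (hSsub x hx).trans (ENNReal.ofReal_le_ofReal (hprod x hx))
    have hreal : (2*r) ^ d ≤ ∑ x ∈ Dint d n, (f x / cfun d ω x) ^ d := by
      have hrhs : 0 ≤ ∑ x ∈ Dint d n, (f x / cfun d ω x) ^ d :=
        Finset.sum_nonneg fun x _ =>
          pow_nonneg (div_nonneg (hf x) (cfun_pos hell x).le) d
      exact (ENNReal.ofReal_le_ofReal_iff hrhs).mp hchain
    -- compare with the ℓ^d norm
    have hsum2 : ∑ x ∈ Dint d n, (f x / cfun d ω x) ^ d ≤
        ((Dfin d n).card : ℝ) * L ^ d := by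
      rw [hLdef, ← card_lpD_pow d n _ hd]
      have hsub : ∑ x ∈ Dint d n, (f x / cfun d ω x) ^ d ≤
          ∑ x ∈ Dfin d n, (f x / cfun d ω x) ^ d := by
        apply Finset.sum_le_sum_of_subset_of_nonneg
        · intro x hx
          exact Finset.mem_of_mem_filter x hx
        · intro x _ _
          exact pow_nonneg (div_nonneg (hf x) (cfun_pos hell x).le) d
      refine hsub.trans_eq (Finset.sum_congr rfl fun x _ => ?_)
      rw [abs_of_nonneg (div_nonneg (hf x) (cfun_pos hell x).le)]
    have hcard' : ((Dfin d n).card : ℝ) ≤ (2 * (n:ℝ) + 1) ^ d := by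
      have h1 := card_Dfin_le d n
      calc ((Dfin d n).card : ℝ) ≤ (((2 * n + 1) ^ d : ℕ) : ℝ) := by exact_mod_cast h1
        _ = (2 * (n:ℝ) + 1) ^ d := by push_cast; ring
    have hfin : (2*r) ^ d ≤ ((2*(n:ℝ)+1) * L) ^ d := by
      calc (2*r) ^ d ≤ ((Dfin d n).card : ℝ) * L ^ d := hreal.trans hsum2
        _ ≤ (2*(n:ℝ)+1) ^ d * L ^ d := mul_le_mul_of_nonneg_right hcard' (by positivity)
        _ = ((2*(n:ℝ)+1) * L) ^ d := (mul_pow _ _ _).symm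
    have h2r : 2*r ≤ (2*(n:ℝ)+1) * L :=
      (pow_le_pow_iff_left₀ (by positivity) (by positivity) (by omega)).mp hfin
    have h2n1 : (2*(n:ℝ)+1) ≤ 3*(n:ℝ) := by
      have : (1:ℝ) ≤ (n:ℝ) := by exact_mod_cast hn
      linarith
    have h2r' : 2*r ≤ 3*(n:ℝ)*L :=
      h2r.trans (mul_le_mul_of_nonneg_right h2n1 hLnn)
    have hMeq : M = r * (3*(n:ℝ)) := by
      rw [hrdef]; field_simp
    have hr32 : r ≤ (3/2)*(n:ℝ)*L := by linarith
    calc M = r * (3*(n:ℝ)) := hMeq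
      _ ≤ ((3/2)*(n:ℝ)*L) * (3*(n:ℝ)) :=
          mul_le_mul_of_nonneg_right hr32 (by positivity)
      _ = (9/2)*(n:ℝ)^2*L := by ring
  intro y
  by_cases hy : normOne y ≤ (n : ℤ)
  · exact (hM y hy).trans key
  · rw [hu0 y (by omega)]
    positivity

end Env

/-- The sub-probability mass of the walk killed at the boundary. -/
def qseq (d n : ℕ) (ω : Env d) (x₀ : Zd d) : ℕ → Zd d → ℝ
  | 0 => fun y => if y = x₀ then 1 else 0
  | (k+1) => fun y => ∑ z ∈ Dint d n, qseq d n ω x₀ k z * (ω z).1 (y - z)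

lemma qseq_nonneg (d n : ℕ) (ω : Env d) (x₀ : Zd d) (k : ℕ) (y : Zd d) :
    0 ≤ qseq d n ω x₀ k y := by
  induction k generalizing y with
  | zero =>
    unfold qseq
    split <;> norm_num
  | succ k ih =>
    unfold qseq
    exact Finset.sum_nonneg fun z _ => mul_nonneg (ih z) (w_nonneg ω z _)

lemma qseq_supp {n : ℕ} {ω : Env d} {x₀ : Zd d} (hx₀ : normOne x₀ < (n : ℤ))
    (k : ℕ) (y : Zd d) (hy : ¬ normOne y ≤ (n : ℤ)) : qseq d n ω x₀ k y = 0 := by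
  induction k generalizing y with
  | zero =>
    unfold qseq
    rw [if_neg]
    rintro rfl
    omega
  | succ k ih =>
    unfold qseq
    apply Finset.sum_eq_zero
    intro z hz
    by_cases hv : y - z ∈ Vfin d
    · exfalso
      have hz' : normOne z < (n : ℤ) := (mem_Dint_iff z).mp hz
      have h1 := normOne_add_le z (y - z)
      have h2 := normOne_le_one_of_mem_Vfin hv
      rw [show z + (y - z) = y by ring] at h1
      omega
    · rw [w_zero ω z hv, mul_zero]

/-- Total mass at time `k`. -/
lemma qseq_mass_le_one {n : ℕ} {ω : Env d} {x₀ : Zd d} (hx₀ : normOne x₀ < (n : ℤ))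
    (hreindex : ∀ (z : Zd d), normOne z < (n : ℤ) → ∀ g : Zd d → ℝ,
      ∑ y ∈ Dfin d n, (ω z).1 (y - z) * g y = ∑ v ∈ Vfin d, (ω z).1 v * g (z + v)) :
    True := trivial

/-- Reindexing lemma : sums over the domain against a transition row collapse to `Vfin`. -/
lemma row_sum {n : ℕ} (ω : Env d) {z : Zd d} (hz : normOne z < (n : ℤ)) (g : Zd d → ℝ) :
    ∑ y ∈ Dfin d n, (ω z).1 (y - z) * g y = ∑ v ∈ Vfin d, (ω z).1 v * g (z + v) := by
  classical
  rw [← Finset.sum_filter_of_ne (s := Dfin d n)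
    (p := fun y => y - z ∈ Vfin d) (f := fun y => (ω z).1 (y - z) * g y) ?hne]
  case hne =>
    intro y _ hy
    by_contra hv
    exact hy (by show (ω z).1 (y - z) * g y = 0; rw [w_zero ω z hv, zero_mul])
  apply Finset.sum_nbij' (i := fun y => y - z) (j := fun v => z + v)
  · intro y hy
    exact (Finset.mem_filter.mp hy).2
  · intro v hv
    rw [Finset.mem_filter]
    constructor
    · rw [mem_Dfin_iff]
      have h1 := normOne_add_le z v
      have h2 := normOne_le_one_of_mem_Vfin hv
      omega
    · rw [show z + v - z = v by ring]
      exact hv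
  · intro y _; ring
  · intro v _; ring
  · intro y _
    rw [show z + (y - z) = y by ring]

/-- The sub-stochastic evolution of the total mass. -/
lemma qseq_mass_succ {n : ℕ} {ω : Env d} {x₀ : Zd d} (hx₀ : normOne x₀ < (n : ℤ)) (k : ℕ) :
    ∑ y ∈ Dfin d n, qseq d n ω x₀ (k+1) y = ∑ z ∈ Dint d n, qseq d n ω x₀ k z := by
  show ∑ y ∈ Dfin d n, ∑ z ∈ Dint d n, qseq d n ω x₀ k z * (ω z).1 (y - z) = _
  rw [Finset.sum_comm]
  apply Finset.sum_congr rfl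
  intro z hz
  have hzlt := (mem_Dint_iff z).mp hz
  have := row_sum (n := n) ω hzlt (fun _ => 1)
  calc ∑ y ∈ Dfin d n, qseq d n ω x₀ k z * (ω z).1 (y - z)
      = qseq d n ω x₀ k z * ∑ y ∈ Dfin d n, (ω z).1 (y - z) * 1 := by
        rw [Finset.mul_sum]
        exact Finset.sum_congr rfl fun y _ => by ring
    _ = qseq d n ω x₀ k z * 1 := by
        rw [this]
        congr 1
        simpa using w_sum ω z
    _ = qseq d n ω x₀ k z := mul_one _

/-- Part 3 : partial sums of the expected occupation sums are controlled by `u x₀`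
plus a boundary term. -/
lemma partial_sum_le (hd : 1 ≤ d) {n : ℕ} (hn : 1 ≤ n) {ω : Env d}
    {x₀ : Zd d} (hx₀ : normOne x₀ < (n : ℤ))
    {f : Zd d → ℝ} (hf : ∀ x, 0 ≤ f x)
    {u : Zd d → ℝ}
    (hu0 : ∀ y : Zd d, ¬ normOne y < (n : ℤ) → u y = 0)
    (hunn : ∀ y, 0 ≤ u y)
    (hueq : ∀ x : Zd d, normOne x < (n : ℤ) →
      u x = f x + ∑ v ∈ Vfin d, (ω x).1 v * u (x + v))
    {Cb : ℝ} (hCb : 0 ≤ Cb) (hCbf : ∀ y ∈ Dfin d n, f y ≤ Cb) :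
    ∀ K : ℕ, ∑ k ∈ Finset.range K, ∑ y ∈ Dfin d n, f y * qseq d n ω x₀ k y ≤
      u x₀ + Cb := by
  classical
  set q := qseq d n ω x₀ with hq
  -- interior and boundary parts
  set A : ℕ → ℝ := fun k => ∑ y ∈ Dfin d n, q k y * u y with hA
  set F : ℕ → ℝ := fun k => ∑ z ∈ Dint d n, q k z * f z with hF
  set m : ℕ → ℝ := fun k => ∑ y ∈ Dfin d n, q k y with hm
  have hqnn : ∀ k y, 0 ≤ q k y := qseq_nonneg d n ω x₀
  -- the supermartingale step
  have hstep : ∀ k, A (k+1) = A k - F k := by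
    intro k
    have h1 : A (k+1) = ∑ z ∈ Dint d n, q k z * (u z - f z) := by
      show ∑ y ∈ Dfin d n, (∑ z ∈ Dint d n, q k z * (ω z).1 (y - z)) * u y = _
      rw [Finset.sum_congr rfl (fun y (_ : y ∈ Dfin d n) => Finset.sum_mul ..),
        Finset.sum_comm]
      apply Finset.sum_congr rfl
      intro z hz
      have hzlt := (mem_Dint_iff z).mp hz
      calc ∑ y ∈ Dfin d n, q k z * (ω z).1 (y - z) * u y
          = q k z * ∑ y ∈ Dfin d n, (ω z).1 (y - z) * u y := by
            rw [Finset.mul_sum]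
            exact Finset.sum_congr rfl fun y _ => by ring
        _ = q k z * ∑ v ∈ Vfin d, (ω z).1 v * u (z + v) := by rw [row_sum ω hzlt u]
        _ = q k z * (u z - f z) := by
            rw [show ∑ v ∈ Vfin d, (ω z).1 v * u (z + v) = u z - f z by
              have := hueq z hzlt; linarith]
    have h2 : A k = ∑ z ∈ Dint d n, q k z * u z := by
      rw [hA]
      symm
      apply Finset.sum_subset
      · intro z hz; exact Finset.mem_of_mem_filter z hz
      · intro z hzD hzI
        have : u z = 0 := hu0 z (fun h => hzI ((mem_Dint_iff z).mpr h))
        rw [this, mul_zero]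
    rw [h1, h2, hF, ← Finset.sum_sub_distrib]
    exact Finset.sum_congr rfl fun z _ => by ring
  -- telescoping interior bound
  have hFsum : ∀ K, ∑ k ∈ Finset.range K, F k = A 0 - A K := by
    intro K
    induction K with
    | zero => rw [Finset.sum_range_zero]; ring
    | succ K ih =>
      rw [Finset.sum_range_succ, ih, hstep K]
      ring
  have hAnn : ∀ k, 0 ≤ A k :=
    fun k => Finset.sum_nonneg fun y _ => mul_nonneg (hqnn k y) (hunn y)
  have hA0 : A 0 = u x₀ := by
    rw [hA]
    show ∑ y ∈ Dfin d n, (if y = x₀ then (1:ℝ) else 0) * u y = u x₀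
    rw [Finset.sum_eq_single x₀]
    · rw [if_pos rfl, one_mul]
    · intro y _ hy
      rw [if_neg hy, zero_mul]
    · intro hx
      exfalso
      exact hx ((mem_Dfin_iff x₀).mpr hx₀.le)
  -- boundary telescoping
  have hmass : ∀ k, m (k+1) ≤ m k := by
    intro k
    rw [hm]
    show ∑ y ∈ Dfin d n, q (k+1) y ≤ ∑ y ∈ Dfin d n, q k y
    rw [qseq_mass_succ hx₀ k]
    apply Finset.sum_le_sum_of_subset_of_nonneg
    · intro z hz; exact Finset.mem_of_mem_filter z hz
    · intro y _ _; exact hqnn k y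
  have hbd : ∀ k, ∑ y ∈ Dfin d n \ Dint d n, q k y = m k - m (k+1) := by
    intro k
    have hsplit : m k = (∑ y ∈ Dint d n, q k y) + ∑ y ∈ Dfin d n \ Dint d n, q k y := by
      show ∑ y ∈ Dfin d n, q k y = _
      rw [← Finset.sum_union Finset.disjoint_sdiff]
      rw [Finset.union_sdiff_of_subset
        (show Dint d n ⊆ Dfin d n from fun z hz => Finset.mem_of_mem_filter z hz)]
    have hm1 : m (k+1) = ∑ y ∈ Dint d n, q k y := by
      rw [hm]; exact qseq_mass_succ hx₀ k
    rw [hm1]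
    linarith [hsplit]
  have hm0 : m 0 = 1 := by
    rw [hm]
    show ∑ y ∈ Dfin d n, (if y = x₀ then (1:ℝ) else 0) = 1
    rw [Finset.sum_ite_eq' (Dfin d n) x₀ (fun _ => (1:ℝ))]
    rw [if_pos ((mem_Dfin_iff x₀).mpr hx₀.le)]
  have hmnn : ∀ k, 0 ≤ m k := fun k => Finset.sum_nonneg fun y _ => hqnn k y
  -- combine
  intro K
  have hsplitsum : ∀ k, ∑ y ∈ Dfin d n, f y * q k y ≤ F k + Cb * (m k - m (k+1)) := by
    intro k
    have h1 : ∑ y ∈ Dfin d n, f y * q k y =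
        (∑ y ∈ Dint d n, f y * q k y) + ∑ y ∈ Dfin d n \ Dint d n, f y * q k y := by
      rw [← Finset.sum_union Finset.disjoint_sdiff]
      rw [Finset.union_sdiff_of_subset
        (show Dint d n ⊆ Dfin d n from fun z hz => Finset.mem_of_mem_filter z hz)]
    rw [h1]
    have h2 : ∑ y ∈ Dint d n, f y * q k y = F k := by
      rw [hF]
      exact Finset.sum_congr rfl fun z _ => by ring
    have h3 : ∑ y ∈ Dfin d n \ Dint d n, f y * q k y ≤
        Cb * ∑ y ∈ Dfin d n \ Dint d n, q k y := by
      rw [Finset.mul_sum]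
      apply Finset.sum_le_sum
      intro y hy
      exact mul_le_mul_of_nonneg_right
        (hCbf y (Finset.mem_sdiff.mp hy).1) (hqnn k y)
    rw [h2]
    have h4 := hbd k
    rw [← h4]
    linarith [h3]
  calc ∑ k ∈ Finset.range K, ∑ y ∈ Dfin d n, f y * q k y
      ≤ ∑ k ∈ Finset.range K, (F k + Cb * (m k - m (k+1))) :=
        Finset.sum_le_sum fun k _ => hsplitsum k
    _ = (∑ k ∈ Finset.range K, F k) + Cb * (m 0 - m K) := by
        rw [Finset.sum_add_distrib, ← Finset.mul_sum]
        congr 1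
        congr 1
        have : ∀ K : ℕ, ∑ k ∈ Finset.range K, (m k - m (k+1)) = m 0 - m K := by
          intro K
          induction K with
          | zero => rw [Finset.sum_range_zero]; ring
          | succ K ih => rw [Finset.sum_range_succ, ih]; ring
        rw [this]
    _ ≤ u x₀ + Cb := by
        rw [hFsum K, hA0]
        have h5 := hAnn K
        have h6 := hmnn K
        have h7 : m 0 - m K ≤ 1 := by rw [hm0]; linarith
        have h8 : Cb * (m 0 - m K) ≤ Cb * 1 := mul_le_mul_of_nonneg_left h7 hCb
        rw [mul_one] at h8
        linarith

/-! ### Probabilistic part : identification of `Qf` with the combinatorial sums -/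

/-- The event that the walk is at `y` at time `k` without having touched the boundary
before time `k`. -/
def Akset (d n k : ℕ) (y : Zd d) : Set (ℕ → Zd d) :=
  {X | X k = y ∧ ∀ j < k, normOne (X j) ≠ (n : ℤ)}

lemma measurableSet_coord (d : ℕ) (k : ℕ) (y : Zd d) :
    MeasurableSet {X : ℕ → Zd d | X k = y} := by
  have : {X : ℕ → Zd d | X k = y} = (fun X : ℕ → Zd d => X k) ⁻¹' {y} := rfl
  rw [this]
  exact (measurable_pi_apply k) (MeasurableSet.singleton y)

lemma measurableSet_Akset (d n k : ℕ) (y : Zd d) : MeasurableSet (Akset d n k y) := by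
  have : Akset d n k y =
      ((fun X : ℕ → Zd d => X k) ⁻¹' {y}) ∩
        ⋂ j ∈ Finset.range k, ((fun X : ℕ → Zd d => X j) ⁻¹'
          {z : Zd d | normOne z ≠ (n : ℤ)}) := by
    ext X
    simp only [Akset, Set.mem_setOf_eq, Set.mem_inter_iff, Set.mem_preimage,
      Set.mem_singleton_iff, Set.mem_iInter, Finset.mem_range]
  rw [this]
  refine ((measurable_pi_apply k) (MeasurableSet.singleton y)).inter ?_
  refine MeasurableSet.biInter (Set.to_countable _) fun j _ => ?_
  exact (measurable_pi_apply j) ((Set.to_countable _).measurableSet)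

/-- Deterministic path through history `c`, position `z` at time `k` and later. -/
def ypath (d k : ℕ) (z : Zd d) (c : Fin k → Zd d) : ℕ → Zd d :=
  fun j => if h : j < k then c ⟨j, h⟩ else z

lemma ypath_agree (d k : ℕ) (z y : Zd d) (c : Fin k → Zd d) {j : ℕ} (hj : j ≤ k) :
    ypath d (k+1) y (fun i : Fin (k+1) => if h : (i : ℕ) < k then c ⟨i, h⟩ else z) j =
      ypath d k z c j := by
  unfold ypath
  rw [dif_pos (by omega : j < k + 1)]

section Prob

variable {n : ℕ} {ω : Env d} {x₀ : Zd d} {P : Measure (ℕ → Zd d)}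

/-- The Markov step at the level of the killed events. -/
lemma markov_step
    (hcyl : ∀ (m : ℕ) (y : ℕ → Zd d),
      P {X | ∀ k ≤ m, X k = y k} =
        (if y 0 = x₀ then
            ∏ k ∈ Finset.range m, ENNReal.ofReal ((ω (y k)).1 (y (k + 1) - y k))
          else 0))
    (k : ℕ) (z y : Zd d) :
    P (Akset d n k z ∩ {X | X (k+1) = y}) =
      P (Akset d n k z) * ENNReal.ofReal ((ω z).1 (y - z)) := by
  classical
  -- decompose into cylinders over histories
  set T := {c : Fin k → Zd d // ∀ j, normOne (c j) ≠ (n : ℤ)} with hT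
  set E : T → Set (ℕ → Zd d) :=
    fun c => {X | ∀ j ≤ k, X j = ypath d k z c.1 j} with hE
  have hdecomp : Akset d n k z = ⋃ c : T, E c := by
    ext X
    constructor
    · rintro ⟨hXk, hXj⟩
      refine Set.mem_iUnion.mpr ⟨⟨fun j => X j, fun j => hXj j j.isLt⟩, ?_⟩
      intro j hj
      unfold ypath
      split
      · rfl
      · have : j = k := by omega
        subst this
        exact hXk
    · intro hX
      obtain ⟨c, hc⟩ := Set.mem_iUnion.mp hX
      constructor
      · have := hc k le_rfl
        unfold ypath at this
        rwa [dif_neg (lt_irrefl k)] at this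
      · intro j hj
        have := hc j hj.le
        unfold ypath at this
        rw [dif_pos hj] at this
        rw [this]
        exact c.2 ⟨j, hj⟩
  have hEmeas : ∀ c : T, MeasurableSet (E c) := by
    intro c
    have : E c = ⋂ j ∈ Finset.range (k+1),
        ((fun X : ℕ → Zd d => X j) ⁻¹' {ypath d k z c.1 j}) := by
      ext X
      simp only [hE, Set.mem_setOf_eq, Set.mem_iInter, Finset.mem_range,
        Set.mem_preimage, Set.mem_singleton_iff]
      constructor
      · intro h j hj; exact h j (by omega)
      · intro h j hj; exact h j (by omega)
    rw [this]
    exact MeasurableSet.biInter (Set.to_countable _) fun j _ =>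
      (measurable_pi_apply j) (MeasurableSet.singleton _)
  have hdisj : Pairwise (Function.onFun Disjoint E) := by
    intro c c' hcc'
    rw [Function.onFun, Set.disjoint_left]
    intro X hX hX'
    apply hcc'
    apply Subtype.ext
    funext j
    have h1 := hX j (le_of_lt j.isLt)
    have h2 := hX' j (le_of_lt j.isLt)
    unfold ypath at h1 h2
    rw [dif_pos j.isLt] at h1 h2
    simpa using h1.symm.trans h2
  -- each cylinder extends by one step with the right factor
  have hstep : ∀ c : T, P (E c ∩ {X | X (k+1) = y}) =
      P (E c) * ENNReal.ofReal ((ω z).1 (y - z)) := by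
    intro c
    set c' : Fin (k+1) → Zd d := fun i => if h : (i : ℕ) < k then c.1 ⟨i, h⟩ else z
      with hc'
    have hinter : E c ∩ {X | X (k+1) = y} =
        {X | ∀ j ≤ k + 1, X j = ypath d (k+1) y c' j} := by
      ext X
      simp only [hE, Set.mem_inter_iff, Set.mem_setOf_eq]
      constructor
      · rintro ⟨h1, h2⟩ j hj
        rcases Nat.lt_or_ge j (k+1) with h | h
        · rw [hc', ypath_agree d k z y c.1 (by omega : j ≤ k)]
          exact h1 j (by omega)
        · have : j = k + 1 := by omega
          subst this
          unfold ypath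
          rw [dif_neg (lt_irrefl (k+1))]
          exact h2
      · intro h
        constructor
        · intro j hj
          have := h j (by omega)
          rwa [hc', ypath_agree d k z y c.1 hj] at this
        · have := h (k+1) le_rfl
          unfold ypath at this
          rwa [dif_neg (lt_irrefl (k+1))] at this
    rw [hinter]
    have h1 := hcyl (k+1) (ypath d (k+1) y c')
    have h2 := hcyl k (ypath d k z c.1)
    have hagree : ∀ j : ℕ, j ≤ k →
        ypath d (k+1) y c' j = ypath d k z c.1 j := fun j hj =>
      ypath_agree d k z y c.1 hj
    have hcond : (ypath d (k+1) y c' 0 = x₀) ↔ (ypath d k z c.1 0 = x₀) := by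
      rw [hagree 0 (Nat.zero_le k)]
    have hprods : ∏ j ∈ Finset.range k,
        ENNReal.ofReal ((ω (ypath d (k+1) y c' j)).1
          (ypath d (k+1) y c' (j+1) - ypath d (k+1) y c' j)) =
        ∏ j ∈ Finset.range k,
        ENNReal.ofReal ((ω (ypath d k z c.1 j)).1
          (ypath d k z c.1 (j+1) - ypath d k z c.1 j)) := by
      apply Finset.prod_congr rfl
      intro j hj
      rw [Finset.mem_range] at hj
      rw [hagree j (by omega), hagree (j+1) (by omega)]
    have hlast : ypath d (k+1) y c' k = z ∧ ypath d (k+1) y c' (k+1) = y := by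
      constructor
      · rw [hagree k le_rfl]
        unfold ypath
        rw [dif_neg (lt_irrefl k)]
      · unfold ypath
        rw [dif_neg (lt_irrefl (k+1))]
    rw [h1, h2, Finset.prod_range_succ, hprods, hlast.1, hlast.2]
    by_cases hcond0 : ypath d k z c.1 0 = x₀
    · rw [if_pos (hcond.mpr hcond0), if_pos hcond0]
    · rw [if_neg (fun h => hcond0 (hcond.mp h)), if_neg hcond0, zero_mul]
  -- sum up
  have hU1 : P (Akset d n k z ∩ {X | X (k+1) = y}) =
      ∑' c : T, P (E c ∩ {X | X (k+1) = y}) := by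
    rw [hdecomp, Set.iUnion_inter]
    refine measure_iUnion ?_ ?_
    · intro c c' hcc'
      exact Set.disjoint_of_subset Set.inter_subset_left Set.inter_subset_left
        (hdisj hcc')
    · intro c
      exact (hEmeas c).inter (measurableSet_coord d (k+1) y)
  have hU2 : P (Akset d n k z) = ∑' c : T, P (E c) := by
    rw [hdecomp]
    exact measure_iUnion hdisj hEmeas
  rw [hU1, hU2, ← ENNReal.tsum_mul_right]
  exact tsum_congr hstep

/-- One-step recursion for the killed events. -/
lemma Akset_succ_eq (k : ℕ) (y : Zd d) :
    P (Akset d n (k+1) y) =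
      ∑' z : {z : Zd d // normOne z ≠ (n : ℤ)},
        P (Akset d n k z.1 ∩ {X | X (k+1) = y}) := by
  classical
  have hdecomp : Akset d n (k+1) y =
      ⋃ z : {z : Zd d // normOne z ≠ (n : ℤ)},
        (Akset d n k z.1 ∩ {X | X (k+1) = y}) := by
    ext X
    constructor
    · rintro ⟨hXk, hXj⟩
      refine Set.mem_iUnion.mpr ⟨⟨X k, hXj k (by omega)⟩, ⟨⟨rfl, ?_⟩, hXk⟩⟩
      intro j hj
      exact hXj j (by omega)
    · intro hX
      obtain ⟨z, ⟨⟨hzk, hzj⟩, hXk1⟩⟩ := Set.mem_iUnion.mp hX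
      refine ⟨hXk1, ?_⟩
      intro j hj
      rcases Nat.lt_or_ge j k with h | h
      · exact hzj j h
      · have : j = k := by omega
        subst this
        rw [hzk]
        exact z.2
  rw [hdecomp]
  refine measure_iUnion ?_ ?_
  · intro z z' hzz'
    rw [Function.onFun, Set.disjoint_left]
    rintro X ⟨⟨hX1, -⟩, -⟩ ⟨⟨hX2, -⟩, -⟩
    exact hzz' (Subtype.ext (hX1 ▸ hX2.symm ▸ rfl))
  · intro z
    exact (measurableSet_Akset d n k z.1).inter (measurableSet_coord d (k+1) y)

/-- Identification of the law of the killed walk with `qseq`. -/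
lemma prob_Akset (hx₀ : normOne x₀ < (n : ℤ))
    (hcyl : ∀ (m : ℕ) (y : ℕ → Zd d),
      P {X | ∀ k ≤ m, X k = y k} =
        (if y 0 = x₀ then
            ∏ k ∈ Finset.range m, ENNReal.ofReal ((ω (y k)).1 (y (k + 1) - y k))
          else 0)) :
    ∀ k y, P (Akset d n k y) = ENNReal.ofReal (qseq d n ω x₀ k y) := by
  classical
  intro k
  induction k with
  | zero =>
    intro y
    have hset : Akset d n 0 y = {X : ℕ → Zd d | ∀ j ≤ 0, X j = (fun _ => y) j} := by
      ext X
      simp only [Akset, Set.mem_setOf_eq]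
      constructor
      · rintro ⟨h, -⟩ j hj
        have : j = 0 := Nat.le_zero.mp hj
        subst this
        exact h
      · intro h
        exact ⟨h 0 le_rfl, fun j hj => absurd hj (Nat.not_lt_zero j)⟩
    rw [hset, hcyl 0 (fun _ => y)]
    show (if y = x₀ then _ else 0) = _
    unfold qseq
    split
    · rw [Finset.prod_range_zero]
      rw [ENNReal.ofReal_one]
    · rw [ENNReal.ofReal_zero]
  | succ k ih =>
    intro y
    rw [Akset_succ_eq k y]
    have hterm : ∀ z : {z : Zd d // normOne z ≠ (n : ℤ)},
        P (Akset d n k z.1 ∩ {X | X (k+1) = y}) =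
          ENNReal.ofReal (qseq d n ω x₀ k z.1 * (ω z.1).1 (y - z.1)) := by
      intro z
      rw [markov_step hcyl k z.1 y, ih z.1,
        ← ENNReal.ofReal_mul (qseq_nonneg d n ω x₀ k z.1)]
    rw [tsum_congr hterm]
    have hsub : ∑' z : {z : Zd d // normOne z ≠ (n : ℤ)},
        ENNReal.ofReal (qseq d n ω x₀ k z.1 * (ω z.1).1 (y - z.1)) =
        ∑' z : Zd d, Set.indicator {z : Zd d | normOne z ≠ (n : ℤ)}
          (fun z => ENNReal.ofReal (qseq d n ω x₀ k z * (ω z).1 (y - z))) z :=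
      tsum_subtype {z : Zd d | normOne z ≠ (n : ℤ)}
        (fun z => ENNReal.ofReal (qseq d n ω x₀ k z * (ω z).1 (y - z)))
    rw [hsub, tsum_eq_sum (s := Dint d n) ?hout]
    case hout =>
      intro z hz
      by_cases hzs : z ∈ {z : Zd d | normOne z ≠ (n : ℤ)}
      · rw [Set.indicator_of_mem hzs]
        have hzn : ¬ normOne z ≤ (n : ℤ) := by
          rw [Set.mem_setOf_eq] at hzs
          intro hle
          exact hz ((mem_Dint_iff z).mpr (by omega))
        rw [qseq_supp hx₀ k z hzn, zero_mul, ENNReal.ofReal_zero]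
      · exact Set.indicator_of_notMem hzs _
    have hin : ∀ z ∈ Dint d n, Set.indicator {z : Zd d | normOne z ≠ (n : ℤ)}
          (fun z => ENNReal.ofReal (qseq d n ω x₀ k z * (ω z).1 (y - z))) z =
          ENNReal.ofReal (qseq d n ω x₀ k z * (ω z).1 (y - z)) := by
      intro z hz
      apply Set.indicator_of_mem
      rw [Set.mem_setOf_eq]
      have := (mem_Dint_iff z).mp hz
      omega
    rw [Finset.sum_congr rfl hin,
      ← ENNReal.ofReal_sum_of_nonneg (fun z _ =>
        mul_nonneg (qseq_nonneg d n ω x₀ k z) (w_nonneg ω z _))]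
    rfl

/-- `k ≤ exitT` is the event of not having touched the boundary before `k`. -/
lemma le_exitT_iff (X : ℕ → Zd d) (k : ℕ) :
    (k : ℕ∞) ≤ exitT d n X ↔ ∀ j < k, normOne (X j) ≠ (n : ℤ) := by
  unfold exitT
  rw [le_sInf_iff]
  constructor
  · intro h j hj hnorm
    have := h (j : ℕ∞) ⟨j, hnorm, rfl⟩
    rw [Nat.cast_le] at this
    omega
  · rintro h b ⟨j, hnorm, rfl⟩
    rw [Nat.cast_le]
    by_contra hlt
    exact h j (by omega) hnorm

/-- `Qf` as a sum of killed occupation masses. -/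
lemma Qf_eq (hd : 1 ≤ d) (hx₀ : normOne x₀ < (n : ℤ)) {f : Zd d → ℝ}
    (hf : ∀ x, 0 ≤ f x)
    (hcyl : ∀ (m : ℕ) (y : ℕ → Zd d),
      P {X | ∀ k ≤ m, X k = y k} =
        (if y 0 = x₀ then
            ∏ k ∈ Finset.range m, ENNReal.ofReal ((ω (y k)).1 (y (k + 1) - y k))
          else 0)) :
    Qf d n f P = ∑' k : ℕ,
      ENNReal.ofReal (∑ y ∈ Dfin d n, f y * qseq d n ω x₀ k y) := by
  classical
  unfold Qf
  have hpt : ∀ X : ℕ → Zd d,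
      (∑' k : ℕ, Set.indicator {k : ℕ | (k : ℕ∞) ≤ exitT d n X}
        (fun k => ENNReal.ofReal (f (X k))) k) =
      ∑' k : ℕ, ∑' y : Zd d,
        Set.indicator (Akset d n k y) (fun _ => ENNReal.ofReal (f y)) X := by
    intro X
    apply tsum_congr
    intro k
    by_cases hcond : (k : ℕ∞) ≤ exitT d n X
    · rw [Set.indicator_of_mem (by exact hcond : k ∈ {k : ℕ | (k : ℕ∞) ≤ exitT d n X})]
      rw [tsum_eq_single (X k) ?hothers]
      case hothers =>
        intro y hy
        apply Set.indicator_of_notMem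
        rintro ⟨h1, -⟩
        exact hy h1.symm
      rw [Set.indicator_of_mem]
      exact ⟨rfl, (le_exitT_iff X k).mp hcond⟩
    · rw [Set.indicator_of_notMem (by exact hcond)]
      symm
      apply Summable.tsum_eq_zero_iff ?_ |>.mpr
      · intro y
        apply Set.indicator_of_notMem
        rintro ⟨-, h2⟩
        exact hcond ((le_exitT_iff X k).mpr h2)
      · exact ENNReal.summable
  rw [lintegral_congr hpt]
  rw [lintegral_tsum (fun k => (Measurable.ennreal_tsum (fun y =>
    Measurable.indicator measurable_const (measurableSet_Akset d n k y))).aemeasurable)]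
  apply tsum_congr
  intro k
  rw [lintegral_tsum (fun y => (Measurable.indicator measurable_const
    (measurableSet_Akset d n k y)).aemeasurable)]
  have hterm : ∀ y : Zd d,
      ∫⁻ X, Set.indicator (Akset d n k y) (fun _ => ENNReal.ofReal (f y)) X ∂P =
        ENNReal.ofReal (f y * qseq d n ω x₀ k y) := by
    intro y
    rw [lintegral_indicator_const (measurableSet_Akset d n k y),
      prob_Akset hx₀ hcyl k y, ← ENNReal.ofReal_mul (hf y)]
  rw [tsum_congr hterm]
  rw [tsum_eq_sum (s := Dfin d n) ?hsupp]
  case hsupp =>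
    intro y hy
    have : ¬ normOne y ≤ (n : ℤ) := fun h => hy ((mem_Dfin_iff y).mpr h)
    rw [qseq_supp hx₀ k y this, mul_zero, ENNReal.ofReal_zero]
  rw [← ENNReal.ofReal_sum_of_nonneg (fun y _ =>
    mul_nonneg (hf y) (qseq_nonneg d n ω x₀ k y))]

end Prob

end GF

/-- Green-function bound: `sup_{x ∈ D_n°} Qf(x) ≤ c₂ n² ‖f/c(ω,·)‖_{d,D_n}`. -/
theorem stmt7 (d : ℕ) (hd : 1 ≤ d) :
    ∃ c₂ : ℝ, 1 < c₂ ∧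
      ∀ n : ℕ, 1 ≤ n →
        ∀ ω : Env d, BalancedEnv d ω → Elliptic d ω →
          ∀ f : Zd d → ℝ, (∀ x : Zd d, 0 ≤ f x) →
            ∀ x₀ : Zd d, normOne x₀ < (n : ℤ) →
              ∀ P : Measure (ℕ → Zd d), IsQuenchedLaw d ω x₀ P →
                Qf d n f P ≤
                  ENNReal.ofReal (c₂ * (n : ℝ) ^ 2 * lpD d n (fun y => f y / cfun d ω y)) := by
  classical
  refine ⟨8, by norm_num, ?_⟩
  intro n hn ω hbal hell f hf x₀ hx₀ P hP
  obtain ⟨hPprob, hcyl⟩ := hP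
  obtain ⟨u, hu0, hunn, hueq⟩ := GF.exists_solution hd n ω hell f hf
  set L := lpD d n (fun y => f y / cfun d ω y) with hL
  have hLnn : 0 ≤ L := GF.lpD_nonneg d n _
  have hn1 : (1:ℝ) ≤ (n:ℝ) := by exact_mod_cast hn
  have habp := GF.abp hd hn hbal hell hf hu0 hunn hueq x₀
  have hCbf : ∀ y ∈ Dfin d n, f y ≤ (2*(n:ℝ)+1) * L := by
    intro y hy
    have h1 : f y ≤ f y / cfun d ω y := by
      rw [le_div_iff₀ (GF.cfun_pos hell y)]
      exact mul_le_of_le_one_right (hf y) (GF.cfun_le_one ω y)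
    exact h1.trans (GF.pointwise_le_lpD hd hell hf hy)
  have hCb : 0 ≤ (2*(n:ℝ)+1) * L := by positivity
  have hpart := GF.partial_sum_le hd hn hx₀ hf hu0 hunn hueq hCb hCbf
  rw [GF.Qf_eq hd hx₀ hf hcyl]
  rw [ENNReal.tsum_eq_iSup_sum]
  apply iSup_le
  intro s
  obtain ⟨K, hK⟩ := s.exists_nat_subset_range
  calc ∑ k ∈ s, ENNReal.ofReal (∑ y ∈ Dfin d n, f y * GF.qseq d n ω x₀ k y)
      ≤ ∑ k ∈ Finset.range K,
          ENNReal.ofReal (∑ y ∈ Dfin d n, f y * GF.qseq d n ω x₀ k y) :=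
        Finset.sum_le_sum_of_subset hK
    _ = ENNReal.ofReal (∑ k ∈ Finset.range K,
          ∑ y ∈ Dfin d n, f y * GF.qseq d n ω x₀ k y) :=
        (ENNReal.ofReal_sum_of_nonneg (fun k _ => Finset.sum_nonneg fun y _ =>
          mul_nonneg (hf y) (GF.qseq_nonneg d n ω x₀ k y))).symm
    _ ≤ ENNReal.ofReal (u x₀ + (2*(n:ℝ)+1) * L) := ENNReal.ofReal_le_ofReal (hpart K)
    _ ≤ ENNReal.ofReal (8 * (n:ℝ)^2 * L) := by
        apply ENNReal.ofReal_le_ofReal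
        have hfact : 0 ≤ L * ((3*(n:ℝ)+1) * ((n:ℝ)-1)) :=
          mul_nonneg hLnn (mul_nonneg (by linarith) (by linarith))
        have h2 : (2*(n:ℝ)+1) * L ≤ 3*(n:ℝ)^2*L := by nlinarith [hfact]
        have h3 : u x₀ ≤ (9/2)*(n:ℝ)^2*L := habp
        have h4 : 0 ≤ (n:ℝ)^2*L := by positivity
        linarith
end
end
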